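/- arXiv:2511.04295 — 6 statements merged into one kernel-verified Lean document; each statement's English description precedes it below -/
import Mathlib

section
/- Let R be a principal (left and right) ideal domain and let r₀ ∈ R be nonzero. If r ∈ R is an Inv-atom (an irreducible element generating a two-sided maximal ideal Rr = rR) such that (Rr₀ : r) ⊄ (rRr₀ : r), where (A : r) = {s ∈ R : sr ∈ A}, then r is the right bound of some irreducible left factor r' of r₀, i.e. rR = ann(R/r'R) where r' is irreducible and r₀ ∈ r'R. Consequently, for each nonzero r₀ there are, up to right associates, only finitely many such Inv-atoms r. -/
/-- `r` is an Inv-atom of `R`: an irreducible element with `Rr = rR` generating a maximal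
two-sided ideal. -/
def IsInvAtom {R : Type*} [Ring R] (r : R) : Prop :=
  Irreducible r ∧
  (∀ a : R, ∃ b : R, a * r = r * b) ∧ (∀ a : R, ∃ b : R, r * a = b * r) ∧
  (Ideal.span {r} : Ideal R) ≠ ⊤ ∧
  (∀ J : TwoSidedIdeal R, r ∈ J → (J : Set R) ≠ Set.univ →
    ∀ y ∈ J, y ∈ (Ideal.span {r} : Ideal R))

/-- The failure of the inclusion `(Rr₀ : r) ⊆ (rRr₀ : r)`,
where `(A : r) = {s : R | s·r ∈ A}`. -/
def ColonNotSubset {R : Type*} [Ring R] (r₀ r : R) : Prop :=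
  ¬ ({s : R | ∃ a : R, s * r = a * r₀} ⊆ {s : R | ∃ a : R, s * r = r * (a * r₀)})

section Helpers

variable {R : Type*} [Ring R] [IsDomain R]

/-- In a domain, a one-sided inverse is two-sided. -/
lemma mul_eq_one_symm_dom {x w : R} (h : x * w = 1) : w * x = 1 := by
  have hid : (w * x) * (w * x - 1) = 0 := by
    have h2 : (w * x) * (w * x) = w * x := by
      calc (w * x) * (w * x) = w * (x * w) * x := by noncomm_ring
      _ = w * x := by rw [h, mul_one]
    rw [mul_sub, h2, mul_one, sub_self]
  rcases mul_eq_zero.mp hid with h0 | h0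
  · exfalso
    have h1 : (1 : R) = 0 := by
      calc (1 : R) = (x * w) * (x * w) := by rw [h, one_mul]
      _ = x * (w * x) * w := by noncomm_ring
      _ = 0 := by rw [h0, mul_zero, zero_mul]
    exact one_ne_zero h1
  · exact sub_eq_zero.mp h0

lemma isUnit_of_mul_eq_one_dom {x w : R} (h : x * w = 1) : IsUnit w :=
  ⟨⟨w, x, mul_eq_one_symm_dom h, h⟩, rfl⟩

lemma isUnit_of_mul_eq_one_dom' {x w : R} (h : x * w = 1) : IsUnit x :=
  ⟨⟨x, w, h, mul_eq_one_symm_dom h⟩, rfl⟩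

/-- The key step: under the colon condition, the Inv-atom `r` left-divides `r₀`. -/
lemma invAtom_left_dvd (hpl : ∀ I : Ideal R, I.IsPrincipal) {r₀ r : R}
    (hirr : Irreducible r)
    (h1 : ∀ a : R, ∃ b : R, a * r = r * b) (h2 : ∀ a : R, ∃ b : R, r * a = b * r)
    (hc : ¬ ({s : R | ∃ a : R, s * r = a * r₀} ⊆ {s : R | ∃ a : R, s * r = r * (a * r₀)})) :
    ∃ s : R, r₀ = r * s := by
  rw [Set.not_subset] at hc
  obtain ⟨s, ⟨a, hsa⟩, hns⟩ := hc
  obtain ⟨t, hst⟩ := h1 s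
  have hrt : r * t = a * r₀ := by rw [← hst, hsa]
  have htn : ¬ ∃ a' : R, t = a' * r₀ := by
    rintro ⟨a', rfl⟩
    exact hns ⟨a', by rw [hst]⟩
  -- the left ideal B = {u | r u ∈ R r₀}
  let B : Submodule R R :=
    { carrier := {u | ∃ v, r * u = v * r₀}
      add_mem' := by
        rintro x y ⟨v, hv⟩ ⟨w, hw⟩
        exact ⟨v + w, by rw [mul_add, hv, hw, add_mul]⟩
      zero_mem' := ⟨0, by simp⟩
      smul_mem' := by
        rintro c x ⟨v, hv⟩
        obtain ⟨c₁, hc₁⟩ := h2 c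
        refine ⟨c₁ * v, ?_⟩
        simp only [smul_eq_mul]
        rw [← mul_assoc, hc₁, mul_assoc, hv, ← mul_assoc] }
  obtain ⟨b, hb⟩ := (hpl B).principal
  have htB : t ∈ B := ⟨a, hrt⟩
  have hr₀B : r₀ ∈ B := ⟨r, rfl⟩
  have hbB : b ∈ B := by
    rw [hb]; exact Submodule.mem_span_singleton_self b
  rw [hb] at htB hr₀B
  obtain ⟨ct, hct⟩ := Ideal.mem_span_singleton'.mp htB
  obtain ⟨c, hcb⟩ := Ideal.mem_span_singleton'.mp hr₀B
  have hbne : b ≠ 0 := by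
    rintro rfl
    exact htn ⟨0, by rw [← hct, mul_zero, zero_mul]⟩
  obtain ⟨v, hv⟩ := hbB
  have hr_eq : r = v * c := by
    have hz : (r - v * c) * b = 0 := by
      rw [sub_mul, hv, ← hcb, mul_assoc, sub_self]
    rcases mul_eq_zero.mp hz with h | h
    · exact sub_eq_zero.mp h
    · exact absurd h hbne
  rcases hirr.isUnit_or_isUnit hr_eq with hu | hu
  · -- v is a unit, so r₀ = v⁻¹ r b and we conclude by normality of r
    obtain ⟨vu, rfl⟩ := hu
    obtain ⟨d, hd⟩ := h1 ((vu⁻¹ : Rˣ) : R)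
    refine ⟨d * b, ?_⟩
    have hcval : c = ((vu⁻¹ : Rˣ) : R) * r := by
      rw [hr_eq, ← mul_assoc, Units.inv_mul, one_mul]
    rw [← hcb, hcval, hd, mul_assoc]
  · -- c is a unit: contradiction with t ∉ Rr₀
    exfalso
    obtain ⟨cu, rfl⟩ := hu
    refine htn ⟨ct * ((cu⁻¹ : Rˣ) : R), ?_⟩
    have hbval : b = ((cu⁻¹ : Rˣ) : R) * r₀ := by
      rw [← hcb, ← mul_assoc, Units.inv_mul, one_mul]
    rw [← hct, hbval, mul_assoc]

/-- The set of right-multiple sets of the Inv-atoms left-dividing `r₀` is finite. -/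
lemma invAtom_setFinite (hpl : ∀ I : Ideal R, I.IsPrincipal) (r₀ : R) (h₀ : r₀ ≠ 0) :
    {P : Set R | ∃ r : R, IsInvAtom r ∧
      (∃ s : R, r₀ = r * s) ∧ P = {x : R | ∃ b : R, x = r * b}}.Finite := by
  classical
  by_contra hinf
  have hi : Set.Infinite _ := hinf
  obtain e := hi.natEmbedding
  have hP : ∀ i : ℕ, ∃ rr : R, IsInvAtom rr ∧
      (∃ s : R, r₀ = rr * s) ∧ ((e i : Set R) = {x : R | ∃ b : R, x = rr * b}) :=
    fun i => (e i).2
  choose rr hA hdvd hE using hP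
  choose w hw using hdvd
  have hIrr : ∀ i, Irreducible (rr i) := fun i => (hA i).1
  have hn1 : ∀ i (a : R), ∃ b, a * rr i = rr i * b := fun i => (hA i).2.1
  have hn2 : ∀ i (a : R), ∃ b, rr i * a = b * rr i := fun i => (hA i).2.2.1
  have hmax : ∀ i, ∀ J : TwoSidedIdeal R, rr i ∈ J → (J : Set R) ≠ Set.univ →
      ∀ y ∈ J, y ∈ (Ideal.span {rr i} : Ideal R) := fun i => (hA i).2.2.2.2
  have hrne : ∀ i, rr i ≠ 0 := fun i => (hIrr i).ne_zero
  have hdist : ∀ i j : ℕ, i ≠ j →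
      ({x : R | ∃ b : R, x = rr i * b} : Set R) ≠ {x : R | ∃ b : R, x = rr j * b} := by
    intro i j hij h
    exact hij (e.injective (Subtype.ext (by rw [hE i, hE j, h])))
  -- the products q n = rr 0 * rr 1 * ... * rr (n-1)
  let q : ℕ → R := fun n => Nat.rec 1 (fun k qk => qk * rr k) n
  have hqs : ∀ n, q (n + 1) = q n * rr n := fun n => rfl
  have hq0 : q 0 = 1 := rfl
  have hqnz : ∀ n, q n ≠ 0 := by
    intro n
    induction n with
    | zero => exact one_ne_zero
    | succ n ih => rw [hqs]; exact mul_ne_zero ih (hrne n)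
  have hqnorm : ∀ n (x : R), ∃ y, q n * x = y * q n := by
    intro n
    induction n with
    | zero => exact fun x => ⟨x, by rw [hq0, one_mul, mul_one]⟩
    | succ n ih =>
      intro x
      obtain ⟨x₁, hx₁⟩ := hn2 n x
      obtain ⟨x₂, hx₂⟩ := ih x₁
      refine ⟨x₂, ?_⟩
      rw [hqs, mul_assoc, hx₁, ← mul_assoc, hx₂, mul_assoc]
  -- comaximality dichotomy
  have hJ : ∀ n k : ℕ, (∃ c, c * rr n = q k) ∨ (∃ a p : R, 1 = a * q k + p * rr n) := by
    intro n k
    let J : TwoSidedIdeal R := TwoSidedIdeal.mk'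
      {x : R | ∃ a p : R, x = a * q k + p * rr n}
      ⟨0, 0, by noncomm_ring⟩
      (by rintro x y ⟨a, p, rfl⟩ ⟨a', p', rfl⟩; exact ⟨a + a', p + p', by noncomm_ring⟩)
      (by rintro x ⟨a, p, rfl⟩; exact ⟨-a, -p, by noncomm_ring⟩)
      (by rintro x y ⟨a, p, rfl⟩; exact ⟨x * a, x * p, by noncomm_ring⟩)
      (by
        rintro x y ⟨a, p, rfl⟩
        obtain ⟨x', hx'⟩ := hqnorm k y
        obtain ⟨x'', hx''⟩ := hn2 n y
        refine ⟨a * x', p * x'', ?_⟩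
        simp only [mul_assoc, add_mul]
        rw [hx', hx''])
    by_cases huniv : (J : Set R) = Set.univ
    · right
      have h1 : (1 : R) ∈ (J : Set R) := by rw [huniv]; trivial
      rw [TwoSidedIdeal.coe_mk'] at h1
      exact h1
    · left
      have hrmem : rr n ∈ J := by
        rw [TwoSidedIdeal.mem_mk']
        exact ⟨0, 1, by noncomm_ring⟩
      have hqmem : q k ∈ J := by
        rw [TwoSidedIdeal.mem_mk']
        exact ⟨1, 0, by noncomm_ring⟩
      have := hmax n J hrmem huniv (q k) hqmem
      exact Ideal.mem_span_singleton'.mp this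
  -- a maximal two-sided ideal is prime
  have hprime : ∀ n k : ℕ, (∃ c, c * rr n = q k) → ∃ i, i < k ∧ ∃ c, c * rr n = rr i := by
    intro n k
    induction k with
    | zero =>
      rintro ⟨c, hc⟩
      rw [hq0] at hc
      exact absurd (isUnit_of_mul_eq_one_dom hc) (hIrr n).not_isUnit
    | succ k ih =>
      rintro ⟨c, hc⟩
      rcases hJ n k with ⟨c', hc'⟩ | ⟨a, p, hap⟩
      · obtain ⟨i, hik, hi⟩ := ih ⟨c', hc'⟩
        exact ⟨i, hik.trans (Nat.lt_succ_self k), hi⟩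
      · refine ⟨k, Nat.lt_succ_self k, ?_⟩
        obtain ⟨k₁, hk₁⟩ := hn2 n (rr k)
        refine ⟨a * c + p * k₁, ?_⟩
        rw [hqs] at hc
        calc (a * c + p * k₁) * rr n = a * (c * rr n) + p * (k₁ * rr n) := by noncomm_ring
        _ = a * (q k * rr k) + p * (rr n * rr k) := by rw [hc, hk₁]
        _ = (a * q k + p * rr n) * rr k := by noncomm_ring
        _ = 1 * rr k := by rw [← hap]
        _ = rr k := one_mul _
  -- main induction: r₀ ∈ q n R for all n
  have hmain : ∀ n : ℕ, ∃ y, r₀ = q n * y := by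
    intro n
    induction n with
    | zero => exact ⟨r₀, by rw [hq0, one_mul]⟩
    | succ n ih =>
      obtain ⟨y, hy⟩ := ih
      rcases hJ n n with ⟨c, hc⟩ | ⟨a, p, hap⟩
      · exfalso
        obtain ⟨i, hin, c', hc'⟩ := hprime n n ⟨c, hc⟩
        -- build the two-sided ideal rr n * R and use maximality of rr i
        obtain ⟨c₁, hc₁⟩ := hn1 n c'
        let Jn : TwoSidedIdeal R := TwoSidedIdeal.mk'
          {x : R | ∃ b : R, x = rr n * b}
          ⟨0, by rw [mul_zero]⟩
          (by rintro x y ⟨b, rfl⟩ ⟨b', rfl⟩; exact ⟨b + b', by rw [mul_add]⟩)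
          (by rintro x ⟨b, rfl⟩; exact ⟨-b, by rw [mul_neg]⟩)
          (by
            rintro x y ⟨b, rfl⟩
            obtain ⟨x₁, hx₁⟩ := hn1 n x
            exact ⟨x₁ * b, by rw [← mul_assoc, hx₁, mul_assoc]⟩)
          (by rintro x y ⟨b, rfl⟩; exact ⟨b * y, by rw [mul_assoc]⟩)
        have hJnuniv : (Jn : Set R) ≠ Set.univ := by
          intro h
          have h1 : (1 : R) ∈ (Jn : Set R) := by rw [h]; trivial
          rw [TwoSidedIdeal.coe_mk'] at h1
          obtain ⟨b, hb⟩ := h1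
          exact (hIrr n).not_isUnit (isUnit_of_mul_eq_one_dom' hb.symm)
        have hri_mem : rr i ∈ Jn := by
          rw [TwoSidedIdeal.mem_mk']
          exact ⟨c₁, by rw [← hc', hc₁]⟩
        have happly := hmax i Jn hri_mem hJnuniv
        apply hdist i n (Nat.ne_of_lt hin)
        ext x
        constructor
        · rintro ⟨b, rfl⟩
          refine ⟨c₁ * b, ?_⟩
          rw [← hc', hc₁, mul_assoc]
        · rintro ⟨b, rfl⟩
          have hmem : rr n * b ∈ Jn := by rw [TwoSidedIdeal.mem_mk']; exact ⟨b, rfl⟩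
          obtain ⟨d, hd⟩ := Ideal.mem_span_singleton'.mp (happly _ hmem)
          obtain ⟨d₁, hd₁⟩ := hn1 i d
          exact ⟨d₁, by rw [← hd, hd₁]⟩
      · obtain ⟨a₁, ha₁⟩ := hn1 n a
        obtain ⟨p₁, hp₁⟩ := hn1 n p
        refine ⟨a₁ * w n + p₁ * y, ?_⟩
        have hyy : y = rr n * (a₁ * w n + p₁ * y) := by
          calc y = 1 * y := (one_mul y).symm
          _ = (a * q n + p * rr n) * y := by rw [← hap]
          _ = a * (q n * y) + (p * rr n) * y := by noncomm_ring
          _ = a * r₀ + (rr n * p₁) * y := by rw [← hy, hp₁]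
          _ = a * (rr n * w n) + (rr n * p₁) * y := by rw [← hw n]
          _ = (a * rr n) * w n + rr n * (p₁ * y) := by noncomm_ring
          _ = (rr n * a₁) * w n + rr n * (p₁ * y) := by rw [ha₁]
          _ = rr n * (a₁ * w n + p₁ * y) := by noncomm_ring
        calc r₀ = q n * y := hy
        _ = q n * (rr n * (a₁ * w n + p₁ * y)) := by rw [← hyy]
        _ = q (n + 1) * (a₁ * w n + p₁ * y) := by rw [hqs, mul_assoc]
  -- extract the ascending chain and contradict Noetherianity
  choose y hy using hmain
  have hyrel : ∀ n, y n = rr n * y (n + 1) := by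
    intro n
    apply mul_left_cancel₀ (hqnz n)
    rw [← hy n, ← mul_assoc, ← hqs, ← hy (n + 1)]
  have hynz : ∀ n, y n ≠ 0 := by
    intro n h
    apply h₀
    rw [hy n, h, mul_zero]
  haveI : IsPrincipalIdealRing R := ⟨hpl⟩
  have hmono : ∀ n, (Ideal.span {y n} : Ideal R) ≤ Ideal.span {y (n + 1)} := by
    intro n
    rw [Ideal.span_le, Set.singleton_subset_iff]
    exact Ideal.mem_span_singleton'.mpr ⟨rr n, (hyrel n).symm⟩
  obtain ⟨n, hn⟩ := monotone_stabilizes_iff_noetherian.mpr inferInstance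
    ⟨fun n => Ideal.span {y n}, monotone_nat_of_le_succ hmono⟩
  have heq : (Ideal.span {y n} : Ideal R) = Ideal.span {y (n + 1)} := hn (n + 1) (Nat.le_succ n)
  have hmem : y (n + 1) ∈ (Ideal.span {y n} : Ideal R) := by
    rw [heq]; exact Ideal.mem_span_singleton_self _
  obtain ⟨z, hz⟩ := Ideal.mem_span_singleton'.mp hmem
  have hzero : (1 - z * rr n) * y (n + 1) = 0 := by
    rw [sub_mul, one_mul, mul_assoc, ← hyrel n, hz, sub_self]
  rcases mul_eq_zero.mp hzero with h | h
  · have hzr : z * rr n = 1 := (sub_eq_zero.mp h).symm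
    exact (hIrr n).not_isUnit (isUnit_of_mul_eq_one_dom hzr)
  · exact hynz (n + 1) h

end Helpers

/-- Let `R` be a principal left and right ideal domain and `0 ≠ r₀ ∈ R`. If `r` is an
Inv-atom with `(Rr₀ : r) ⊄ (rRr₀ : r)`, then `r` is the right bound of some irreducible left
factor `r'` of `r₀`, i.e. `rR = ann(R/r'R)` with `r'` irreducible and `r₀ ∈ r'R`.
Consequently, up to right associates there are only finitely many such Inv-atoms `r`. -/
theorem invAtom_bound_of_colon_not_subset {R : Type*} [Ring R] [IsDomain R]
    (hpl : ∀ I : Ideal R, I.IsPrincipal) (hpr : ∀ I : Ideal Rᵐᵒᵖ, I.IsPrincipal)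
    (r₀ : R) (h₀ : r₀ ≠ 0) :
    (∀ r : R, IsInvAtom r → ColonNotSubset r₀ r →
      ∃ r' : R, Irreducible r' ∧ (∃ s : R, r₀ = r' * s) ∧
        -- `rR = ann(R/r'R)`: the right multiples of `r` are exactly the elements
        -- annihilating the right `R`-module `R/r'R`
        (∀ a : R, (∃ b : R, a = r * b) ↔ (∀ c : R, ∃ d : R, c * a = r' * d))) ∧
    ∃ T : Finset R, ∀ r : R, IsInvAtom r → ColonNotSubset r₀ r →
      ∃ t ∈ T, ∃ u : R, IsUnit u ∧ r = t * u := by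
  classical
  constructor
  · -- part 1: `r' = r` works
    intro r hr hc
    obtain ⟨hirr, h1, h2, hsp, hmax⟩ := hr
    obtain ⟨s, hs⟩ := invAtom_left_dvd hpl hirr h1 h2 hc
    refine ⟨r, hirr, ⟨s, hs⟩, fun a => ⟨?_, ?_⟩⟩
    · rintro ⟨b, rfl⟩ c
      obtain ⟨c', hc'⟩ := h1 c
      exact ⟨c' * b, by rw [← mul_assoc, hc', mul_assoc]⟩
    · intro h
      obtain ⟨d, hd⟩ := h 1
      exact ⟨d, by rwa [one_mul] at hd⟩
  · -- part 2: finiteness up to right associates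
    have hSfin := invAtom_setFinite hpl r₀ h₀
    set S : Set (Set R) := {P : Set R | ∃ r : R, IsInvAtom r ∧
      (∃ s : R, r₀ = r * s) ∧ P = {x : R | ∃ b : R, x = r * b}} with hSdef
    let pick : Set R → R := fun P => if h : P ∈ S then h.choose else 0
    refine ⟨hSfin.toFinset.image pick, ?_⟩
    intro r hr hc
    obtain ⟨hirr, h1, h2, hsp, hmax⟩ := hr
    have hdvd : ∃ s : R, r₀ = r * s := invAtom_left_dvd hpl hirr h1 h2 hc
    have hPS : {x : R | ∃ b : R, x = r * b} ∈ S :=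
      ⟨r, ⟨hirr, h1, h2, hsp, hmax⟩, hdvd, rfl⟩
    refine ⟨pick {x : R | ∃ b : R, x = r * b}, ?_, ?_⟩
    · exact Finset.mem_image.mpr ⟨_, hSfin.mem_toFinset.mpr hPS, rfl⟩
    · have hpick : pick {x : R | ∃ b : R, x = r * b} = hPS.choose := dif_pos hPS
      obtain ⟨ht_atom, ht_dvd, ht_eq⟩ := hPS.choose_spec
      set t := hPS.choose
      -- r ∈ tR and t ∈ rR
      have hrmem : r ∈ {x : R | ∃ b : R, x = t * b} := by
        rw [← ht_eq]; exact ⟨1, (mul_one r).symm⟩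
      obtain ⟨u, hu⟩ := hrmem
      have htmem : t ∈ {x : R | ∃ b : R, x = r * b} := by
        rw [ht_eq]; exact ⟨1, (mul_one t).symm⟩
      obtain ⟨v, hv⟩ := htmem
      have hrne : r ≠ 0 := hirr.ne_zero
      have hvu : v * u = 1 := by
        apply mul_left_cancel₀ hrne
        rw [mul_one, ← mul_assoc, ← hv, ← hu]
      refine ⟨u, isUnit_of_mul_eq_one_dom hvu, ?_⟩
      rw [hpick, hu]
end

section
/- Let R be a principal left and right ideal domain, σ : R → R an automorphism, and δ : R → R a σ-derivation. If R has infinitely many distinct maximal two-sided ideals that are invariant under both σ and δ, then for every maximal left ideal M of the Ore extension R[x; σ, δ], the intersection M ∩ R is nonzero. -/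
open Finsupp

section OreAuxSec

variable {R : Type*} [Ring R]

private lemma ore_comax (P Q : TwoSidedIdeal R) (hP : IsCoatom P) (hQ : IsCoatom Q) (hne : P ≠ Q) :
    ∃ u ∈ P, ∃ q ∈ Q, u + q = 1 := by
  have hsup : P ⊔ Q = ⊤ := by
    rcases lt_or_eq_of_le (le_sup_left : P ≤ P ⊔ Q) with h | h
    · exact hP.2 _ h
    · exfalso
      have hQP : Q ≤ P := by rw [h]; exact le_sup_right
      rcases lt_or_eq_of_le hQP with h' | h'
      · exact hP.1 (hQ.2 _ h')
      · exact hne h'.symm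
  set D : TwoSidedIdeal R := TwoSidedIdeal.mk' {x | ∃ u ∈ P, ∃ q ∈ Q, u + q = x}
    ⟨0, P.zero_mem, 0, Q.zero_mem, by simp⟩
    (by rintro _ _ ⟨u, hu, q, hq, rfl⟩ ⟨u', hu', q', hq', rfl⟩
        exact ⟨u + u', P.add_mem hu hu', q + q', Q.add_mem hq hq', by abel⟩)
    (by rintro _ ⟨u, hu, q, hq, rfl⟩
        exact ⟨-u, P.neg_mem hu, -q, Q.neg_mem hq, by abel⟩)
    (by rintro y _ ⟨u, hu, q, hq, rfl⟩
        exact ⟨y * u, P.mul_mem_left _ _ hu, y * q, Q.mul_mem_left _ _ hq, (mul_add y u q).symm⟩)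
    (by rintro _ y ⟨u, hu, q, hq, rfl⟩
        exact ⟨u * y, P.mul_mem_right _ _ hu, q * y, Q.mul_mem_right _ _ hq, (add_mul u q y).symm⟩)
    with hD
  have hPD : P ≤ D := by
    intro a ha
    rw [hD, TwoSidedIdeal.mem_mk']
    exact ⟨a, ha, 0, Q.zero_mem, by simp⟩
  have hQD : Q ≤ D := by
    intro a ha
    rw [hD, TwoSidedIdeal.mem_mk']
    exact ⟨0, P.zero_mem, a, ha, by simp⟩
  have h1 : (1 : R) ∈ D := by
    have := sup_le hPD hQD
    rw [hsup] at this
    exact this (TwoSidedIdeal.mem_top R)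
  rw [hD, TwoSidedIdeal.mem_mk'] at h1
  exact h1

private lemma ore_noeth (hpl : ∀ I : Ideal R, I.IsPrincipal) : IsNoetherianRing R := by
  rw [isNoetherianRing_iff_ideal_fg]
  intro I
  obtain ⟨x, hx⟩ := (hpl I).principal
  exact ⟨{x}, by simpa using hx.symm⟩

private lemma ore_cancel_mod [IsDomain R] (hpl : ∀ I : Ideal R, I.IsPrincipal)
    (P : TwoSidedIdeal R) (c w p : R) (hp : p ∈ P) (h1 : w * c + p = 1)
    (r : R) (hrc : r * c ∈ P) : r ∈ P := by
  haveI := ore_noeth hpl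
  set P' : Ideal R := TwoSidedIdeal.asIdeal P with hP'
  have hmem : ∀ z : R, z ∈ P' ↔ z ∈ P := fun z => TwoSidedIdeal.mem_asIdeal
  have hle : P' ≤ Submodule.comap (LinearMap.toSpanSingleton R R c) P' := by
    intro z hz
    rw [Submodule.mem_comap, LinearMap.toSpanSingleton_apply, smul_eq_mul, hmem]
    exact P.mul_mem_right _ _ ((hmem z).mp hz)
  set φ : (R ⧸ P') →ₗ[R] (R ⧸ P') := Submodule.mapQ P' P' (LinearMap.toSpanSingleton R R c) hle
    with hφdef
  have hφ : ∀ z : R, φ (Submodule.Quotient.mk z) = Submodule.Quotient.mk (z * c) := by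
    intro z
    rw [hφdef, Submodule.mapQ_apply, LinearMap.toSpanSingleton_apply, smul_eq_mul]
  have hsurj : Function.Surjective φ := by
    intro zq
    obtain ⟨z, rfl⟩ := Submodule.Quotient.mk_surjective P' zq
    refine ⟨Submodule.Quotient.mk (z * w), ?_⟩
    rw [hφ, Submodule.Quotient.eq]
    have hwc : w * c = 1 - p := by rw [← h1]; abel
    have h2 : z * w * c - z = -(z * p) := by rw [mul_assoc, hwc]; noncomm_ring
    rw [h2]
    exact Submodule.neg_mem _ ((hmem _).mpr (P.mul_mem_left z p hp))
  have hinj := IsNoetherian.injective_of_surjective_endomorphism φ hsurj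
  have h0 : φ (Submodule.Quotient.mk r) = φ 0 := by
    rw [hφ, map_zero, Submodule.Quotient.mk_eq_zero]
    exact (hmem _).mpr hrc
  have := hinj h0
  rw [Submodule.Quotient.mk_eq_zero] at this
  exact (hmem r).mp this

private lemma ore_bad_finite [IsDomain R] (hpl : ∀ I : Ideal R, I.IsPrincipal)
    (hpr : ∀ I : Ideal Rᵐᵒᵖ, I.IsPrincipal) (c : R) (hc : c ≠ 0) :
    {P : TwoSidedIdeal R | IsCoatom P ∧
      ¬ ∃ y ∈ Ideal.span ({c} : Set R), ∃ p ∈ P, y + p = 1}.Finite := by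
  by_contra hinf
  have emb := Set.Infinite.natEmbedding _ (hinf : Set.Infinite _)
  set Pi : ℕ → TwoSidedIdeal R := fun k => (emb k).1 with hPidef
  have hPi : ∀ k, IsCoatom (Pi k) ∧ ¬ ∃ y ∈ Ideal.span ({c} : Set R), ∃ p ∈ Pi k, y + p = 1 :=
    fun k => (emb k).2
  have hne : ∀ k l, k ≠ l → Pi k ≠ Pi l := fun k l h hh => h (emb.injective (Subtype.ext hh))
  have hu : ∀ (F : Finset ℕ) (j : ℕ), j ∉ F →
      ∃ u, (∀ i ∈ F, u ∈ Pi i) ∧ ∃ q ∈ Pi j, u + q = 1 := by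
    intro F
    induction F using Finset.induction_on with
    | empty => exact fun j _ => ⟨1, by simp, 0, (Pi j).zero_mem, by simp⟩
    | @insert a F ha ih =>
      intro j hj
      have hjF : j ∉ F := fun h => hj (Finset.mem_insert_of_mem h)
      have haj : a ≠ j := fun h => hj (h ▸ Finset.mem_insert_self a F)
      obtain ⟨u, hF, q, hq, huq⟩ := ih j hjF
      obtain ⟨u₀, hu₀, q₀, hq₀, h₀⟩ := ore_comax (Pi a) (Pi j) (hPi a).1 (hPi j).1 (hne a j haj)
      refine ⟨u * u₀, ?_, q + q₀ - q * q₀, ?_, ?_⟩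
      · intro i hi
        rcases Finset.mem_insert.mp hi with rfl | hi
        · exact (Pi i).mul_mem_left _ _ hu₀
        · exact (Pi i).mul_mem_right _ _ (hF i hi)
      · exact (Pi j).sub_mem ((Pi j).add_mem hq hq₀) ((Pi j).mul_mem_right _ _ hq)
      · have h1 : u = 1 - q := by rw [← huq]; abel
        have h2 : u₀ = 1 - q₀ := by rw [← h₀]; abel
        rw [h1, h2]; noncomm_ring
  set Qk : ℕ → Ideal R := fun k =>
    Ideal.span {c} ⊔ (Finset.range (k+1)).inf (fun i => TwoSidedIdeal.asIdeal (Pi i)) with hQdef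
  have hmono : ∀ k, Qk (k+1) ≤ Qk k := by
    intro k
    exact sup_le_sup_left (Finset.inf_mono (by
      intro i hi
      exact Finset.mem_range.mpr (lt_trans (Finset.mem_range.mp hi) (Nat.lt_succ_self _)))) _
  have hstrict : ∀ k, Qk (k+1) ≠ Qk k := by
    intro k heq
    obtain ⟨u, hF, q, hq, huq⟩ := hu (Finset.range (k+1)) (k+1) (by simp)
    have humem : u ∈ Qk k := by
      apply Submodule.mem_sup_right
      rw [Submodule.mem_finsetInf]
      intro i hi
      exact TwoSidedIdeal.mem_asIdeal.mpr (hF i hi)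
    rw [← heq] at humem
    have hle2 : Qk (k+1) ≤ Ideal.span {c} ⊔ TwoSidedIdeal.asIdeal (Pi (k+1)) := by
      apply sup_le_sup_left
      exact Finset.inf_le (Finset.mem_range.mpr (Nat.lt_succ_self _))
    obtain ⟨y, hy, z, hz, hyz⟩ := Submodule.mem_sup.mp (hle2 humem)
    refine (hPi (k+1)).2 ⟨y, hy, z + q, (Pi (k+1)).add_mem (TwoSidedIdeal.mem_asIdeal.mp hz) hq, ?_⟩
    rw [← add_assoc, hyz, huq]
  haveI inst : ∀ k, (Qk k).IsPrincipal := fun k => hpl _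
  set e : ℕ → R := fun k => Submodule.IsPrincipal.generator (Qk k) with hedef
  have hspan : ∀ k, Ideal.span {e k} = Qk k := fun k => Ideal.span_singleton_generator _
  have hcQ : ∀ k, c ∈ Qk k := fun k =>
    Submodule.mem_sup_left (Submodule.mem_span_singleton_self c)
  have hA0 : ∀ k, ∃ a, a * e k = c := by
    intro k
    exact Ideal.mem_span_singleton'.mp (by rw [hspan]; exact hcQ k)
  choose a hA using hA0
  have hT0 : ∀ k, ∃ t, t * e k = e (k+1) := by
    intro k
    exact Ideal.mem_span_singleton'.mp
      (by rw [hspan]; exact hmono k (Submodule.IsPrincipal.generator_mem _))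
  choose t hT using hT0
  have hek : ∀ k, e k ≠ 0 := fun k h => hc (by rw [← hA k, h, mul_zero])
  have hane : ∀ k, a k ≠ 0 := fun k h => hc (by rw [← hA k, h, zero_mul])
  have hat : ∀ k, a k = a (k+1) * t k := by
    intro k
    apply mul_right_cancel₀ (hek k)
    rw [hA k, mul_assoc, hT k, hA (k+1)]
  haveI : IsNoetherianRing Rᵐᵒᵖ := ore_noeth hpr
  set A : ℕ →o Ideal Rᵐᵒᵖ := ⟨fun k => Ideal.span {MulOpposite.op (a k)},
    monotone_nat_of_le_succ (by
      intro k
      rw [Ideal.span_le, Set.singleton_subset_iff]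
      rw [show MulOpposite.op (a k) = MulOpposite.op (t k) * MulOpposite.op (a (k+1)) by
        rw [← MulOpposite.op_mul, ← hat k]]
      exact Ideal.mul_mem_left _ _ (Ideal.subset_span rfl))⟩ with hAdef
  obtain ⟨K, hK⟩ := monotone_stabilizes_iff_noetherian.mpr inferInstance A
  have h1 : A (K+1) = A K := (hK (K+1) (Nat.le_succ K)).symm
  have hmemA : MulOpposite.op (a (K+1)) ∈ Ideal.span {MulOpposite.op (a K)} := by
    have h2 : MulOpposite.op (a (K+1)) ∈ A (K+1) := Ideal.subset_span rfl
    rwa [h1] at h2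
  obtain ⟨z, hz⟩ := Ideal.mem_span_singleton'.mp hmemA
  have hw : a (K+1) = a K * z.unop := by
    apply MulOpposite.op_injective
    rw [← hz, MulOpposite.op_mul, MulOpposite.op_unop]
  set w := z.unop
  have h2 : a K * (w * t K) = a K * 1 := by
    rw [mul_one, ← mul_assoc, ← hw, ← hat K]
  have hwt : w * t K = 1 := mul_left_cancel₀ (hane K) h2
  have htne : t K ≠ 0 := fun h => hek (K+1) (by rw [← hT K, h, zero_mul])
  have hEE : e K ∈ Ideal.span {e (K+1)} := by
    rw [Ideal.mem_span_singleton']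
    exact ⟨w, by rw [← hT K, ← mul_assoc, hwt, one_mul]⟩
  have hQle : Qk K ≤ Qk (K+1) := by
    rw [← hspan K, ← hspan (K+1)]
    rw [Ideal.span_le, Set.singleton_subset_iff]
    exact hEE
  exact hstrict K (le_antisymm (hmono K) hQle)

end OreAuxSec

/-- Let `R` be a principal left and right ideal domain, `σ` an automorphism of `R` and `δ` a
`σ`-derivation. Let `S = R[x; σ, δ]` be the Ore extension: `S` is free as a left `R`-module
with basis `1, x, x², …` and `x·a = σ(a)·x + δ(a)` for `a ∈ R`. If `R` has infinitely many
distinct maximal two-sided ideals invariant under both `σ` and `δ`, then every maximal left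
ideal `M` of `S` satisfies `M ∩ R ≠ 0`. -/
theorem oreExtension_comap_ne_bot_of_pid {R S : Type*} [Ring R] [Ring S] [IsDomain R]
    (hpl : ∀ I : Ideal R, I.IsPrincipal) (hpr : ∀ I : Ideal Rᵐᵒᵖ, I.IsPrincipal)
    (σ : R ≃+* R) (δ : R → R)
    (hδadd : ∀ a b : R, δ (a + b) = δ a + δ b)
    (hδmul : ∀ a b : R, δ (a * b) = σ a * δ b + δ a * b)
    (ι : R →+* S) (x : S)
    (b : @Module.Basis ℕ R S _ _ (Module.compHom S ι)) (hb : ∀ i : ℕ, b i = x ^ i)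
    (hrel : ∀ a : R, x * ι a = ι (σ a) * x + ι (δ a))
    (hinf : {I : TwoSidedIdeal R | IsCoatom I ∧ (∀ a ∈ I, σ a ∈ I) ∧
      (∀ a ∈ I, δ a ∈ I)}.Infinite)
    (M : Ideal S) (hM : M.IsMaximal) :
    Ideal.comap ι M ≠ ⊥ := by
  intro hbot
  classical
  letI : Module R S := Module.compHom S ι
  have hsmul : ∀ (r : R) (s : S), r • s = ι r * s := fun r s => rfl
  have hδ0 : δ 0 = 0 := by
    have h := (hδadd 0 0).symm
    rw [add_zero] at h
    exact add_eq_left.mp h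
  -- the coefficient formula for multiplication by x
  have key : ∀ g : S, b.repr (x * g) =
      mapDomain Nat.succ ((b.repr g).mapRange σ (map_zero σ)) + (b.repr g).mapRange δ hδ0 := by
    intro g
    have h1 : x * g = Finsupp.linearCombination R b
        (mapDomain Nat.succ ((b.repr g).mapRange σ (map_zero σ)) + (b.repr g).mapRange δ hδ0) := by
      conv_lhs => rw [← b.linearCombination_repr g]
      rw [map_add, Finsupp.linearCombination_mapDomain]
      rw [Finsupp.linearCombination_apply, Finsupp.linearCombination_apply,
        Finsupp.linearCombination_apply]
      rw [Finsupp.sum_mapRange_index (by simp), Finsupp.sum_mapRange_index (by simp [hδ0])]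
      rw [Finsupp.mul_sum, ← Finsupp.sum_add]
      apply Finsupp.sum_congr
      intro i _
      simp only [hsmul, Function.comp_apply, hb]
      rw [← mul_assoc, hrel, add_mul, mul_assoc, ← pow_succ']
    rw [h1, b.repr_linearCombination]
  have c0 : ∀ g : S, b.repr (x * g) 0 = δ (b.repr g 0) := by
    intro g
    rw [key g, Finsupp.add_apply, Finsupp.mapDomain_notin_range, Finsupp.mapRange_apply, zero_add]
    rintro ⟨i, hi⟩
    exact Nat.succ_ne_zero i hi
  have cs : ∀ (g : S) (i : ℕ), b.repr (x * g) (i+1) = σ (b.repr g i) + δ (b.repr g (i+1)) := by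
    intro g i
    rw [key g, Finsupp.add_apply, Finsupp.mapRange_apply,
      Finsupp.mapDomain_apply Nat.succ_injective, Finsupp.mapRange_apply]
  -- coefficients of left multiples
  have crmul : ∀ (a : R) (g : S) (i : ℕ), b.repr (ι a * g) i = a * b.repr g i := by
    intro a g i
    rw [← hsmul, map_smul, Finsupp.smul_apply, smul_eq_mul]
  -- a polynomial with coefficients only in degree 0 is a constant
  have hconst : ∀ g : S, (∀ i, 0 < i → b.repr g i = 0) → g = ι (b.repr g 0) := by
    intro g hg
    have hrepr : b.repr g = Finsupp.single 0 (b.repr g 0) := by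
      ext i
      cases i with
      | zero => simp
      | succ k =>
        rw [hg (k+1) (Nat.succ_pos k), Finsupp.single_eq_of_ne (by omega)]
    calc g = Finsupp.linearCombination R b (b.repr g) := (b.linearCombination_repr g).symm
    _ = Finsupp.linearCombination R b (Finsupp.single 0 (b.repr g 0)) := by rw [← hrepr]
    _ = (b.repr g 0) • b 0 := Finsupp.linearCombination_single _ _ _
    _ = ι (b.repr g 0) := by rw [hsmul, hb 0, pow_zero, mul_one]
  -- the ideals of leading coefficients
  set J : ℕ → Ideal R := fun n =>
    { carrier := {r | ∃ g ∈ M, b.repr g n = r ∧ ∀ i, n < i → b.repr g i = 0}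
      add_mem' := by
        rintro r s ⟨g, hg, hgn, hgt⟩ ⟨g', hg', hgn', hgt'⟩
        refine ⟨g + g', M.add_mem hg hg', ?_, ?_⟩
        · rw [map_add, Finsupp.add_apply, hgn, hgn']
        · intro i hi
          rw [map_add, Finsupp.add_apply, hgt i hi, hgt' i hi, add_zero]
      zero_mem' := ⟨0, M.zero_mem, by simp, by simp⟩
      smul_mem' := by
        rintro a r ⟨g, hg, hgn, hgt⟩
        refine ⟨ι a * g, M.mul_mem_left (ι a) hg, ?_, ?_⟩
        · rw [crmul, hgn]; rfl
        · intro i hi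
          rw [crmul, hgt i hi, mul_zero] } with hJdef
  have hJmem : ∀ (n : ℕ) (r : R),
      r ∈ J n ↔ ∃ g ∈ M, b.repr g n = r ∧ ∀ i, n < i → b.repr g i = 0 := fun n r => Iff.rfl
  -- σ maps J n into J (n+1)
  have hJstep : ∀ (n : ℕ) (r : R), r ∈ J n → σ r ∈ J (n+1) := by
    intro n r hr
    obtain ⟨g, hg, hgn, hgt⟩ := (hJmem n r).mp hr
    refine (hJmem _ _).mpr ⟨x * g, M.mul_mem_left x hg, ?_, ?_⟩
    · rw [cs, hgn, hgt (n+1) (Nat.lt_succ_self n), hδ0, add_zero]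
    · intro i hi
      cases i with
      | zero => omega
      | succ k =>
        have hk : n < k := by omega
        rw [cs, hgt k hk, hgt (k+1) (by omega), map_zero, hδ0, add_zero]
  -- pick a good maximal two-sided ideal P
  obtain ⟨P, hPco, hσP, hδP, hPne, hgood⟩ : ∃ P : TwoSidedIdeal R, IsCoatom P ∧
      (∀ a ∈ P, σ a ∈ P) ∧ (∀ a ∈ P, δ a ∈ P) ∧ P ≠ ⊥ ∧
      (∀ m : ℕ, J m ≠ ⊥ → ∃ y ∈ J m, ∃ p ∈ P, y + p = 1) := by
    by_cases hex : ∃ n, J n ≠ ⊥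
    · set n := Nat.find hex with hn
      have hJn : J n ≠ ⊥ := Nat.find_spec hex
      have hmin : ∀ m, m < n → J m = ⊥ := by
        intro m hm
        by_contra hmb
        exact Nat.find_min hex hm hmb
      haveI : (J n).IsPrincipal := hpl _
      set c : R := Submodule.IsPrincipal.generator (J n) with hcdef
      have hcspan : Ideal.span {c} = J n := Ideal.span_singleton_generator _
      have hc0 : c ≠ 0 := by
        intro h
        apply hJn
        rw [← hcspan, h]
        simp
      have hbadfin := ore_bad_finite hpl hpr c hc0
      have hnon := ((hinf.diff (hbadfin.union (Set.finite_singleton ⊥))).nonempty)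
      obtain ⟨P, hPS, hPnb⟩ := hnon
      obtain ⟨hPco, hσP, hδP⟩ := hPS
      have hPne : P ≠ ⊥ := by
        intro h
        exact hPnb (Or.inr (by simp [h]))
      have hPg : ∃ y ∈ Ideal.span ({c} : Set R), ∃ p ∈ P, y + p = 1 := by
        by_contra hng
        exact hPnb (Or.inl ⟨hPco, hng⟩)
      refine ⟨P, hPco, hσP, hδP, hPne, ?_⟩
      -- goodness transfers upwards from n
      have hup : ∀ m, n ≤ m → ∃ y ∈ J m, ∃ p ∈ P, y + p = 1 := by
        intro m hm
        induction m, hm using Nat.le_induction with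
        | base =>
          obtain ⟨y, hy, p, hp, hyp⟩ := hPg
          exact ⟨y, hcspan ▸ hy, p, hp, hyp⟩
        | succ m hm ih =>
          obtain ⟨y, hy, p, hp, hyp⟩ := ih
          refine ⟨σ y, hJstep m y hy, σ p, hσP p hp, ?_⟩
          rw [← map_add, hyp, map_one]
      intro m hm
      have hnm : n ≤ m := by
        by_contra h
        exact hm (hmin m (by omega))
      exact hup m hnm
    · push_neg at hex
      have hnon := ((hinf.diff (Set.finite_singleton ⊥)).nonempty)
      obtain ⟨P, hPS, hPnb⟩ := hnon
      obtain ⟨hPco, hσP, hδP⟩ := hPS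
      refine ⟨P, hPco, hσP, hδP, by simpa using hPnb, ?_⟩
      intro m hm
      exact absurd (hex m) hm
  -- the left ideal of polynomials with all coefficients in P
  have hxT : ∀ g : S, (∀ i, b.repr g i ∈ P) → ∀ i, b.repr (x * g) i ∈ P := by
    intro g hg i
    cases i with
    | zero => rw [c0]; exact hδP _ (hg 0)
    | succ k => rw [cs]; exact P.add_mem (hσP _ (hg k)) (hδP _ (hg (k+1)))
  have hpowT : ∀ (k : ℕ) (g : S), (∀ i, b.repr g i ∈ P) → ∀ i, b.repr (x ^ k * g) i ∈ P := by
    intro k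
    induction k with
    | zero => intro g hg i; rw [pow_zero, one_mul]; exact hg i
    | succ k ih =>
      intro g hg i
      rw [pow_succ', mul_assoc]
      exact hxT _ (ih g hg) i
  set T : Ideal S :=
    { carrier := {g | ∀ i, b.repr g i ∈ P}
      add_mem' := by
        intro g g' hg hg' i
        rw [map_add, Finsupp.add_apply]
        exact P.add_mem (hg i) (hg' i)
      zero_mem' := by intro i; rw [map_zero]; exact P.zero_mem
      smul_mem' := by
        intro s g hg
        have hmul : s * g = Finsupp.sum (b.repr s) (fun k a => a • (x ^ k * g)) := by
          conv_lhs => rw [← b.linearCombination_repr s]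
          rw [Finsupp.linearCombination_apply, Finsupp.sum_mul]
          apply Finsupp.sum_congr
          intro k _
          rw [hsmul, hb, mul_assoc, ← hsmul]
        show ∀ i, b.repr (s * g) i ∈ P
        intro i
        rw [hmul, map_finsuppSum, Finsupp.sum_apply]
        apply sum_mem
        intro k _
        show b.repr ((b.repr s k) • (x ^ k * g)) i ∈ P
        rw [map_smul, Finsupp.smul_apply, smul_eq_mul]
        exact P.mul_mem_left _ _ (hpowT k g hg i) } with hTdef
  have hTmem : ∀ g : S, g ∈ T ↔ ∀ i, b.repr g i ∈ P := fun g => Iff.rfl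
  obtain ⟨p₀, hp₀P, hp₀⟩ : ∃ p ∈ P, p ≠ (0:R) := by
    by_contra hcon
    push_neg at hcon
    refine hPne (TwoSidedIdeal.ext fun y => ?_)
    rw [TwoSidedIdeal.mem_bot]
    exact ⟨fun hy => hcon y hy, fun hy => hy ▸ P.zero_mem⟩
  have hιp₀T : ι p₀ ∈ T := by
    rw [hTmem]
    intro i
    have h2 : ι p₀ = p₀ • b 0 := by rw [hsmul, hb 0, pow_zero, mul_one]
    rw [h2, map_smul, b.repr_self, Finsupp.smul_apply, Finsupp.single_apply]
    split
    · rw [smul_eq_mul, mul_one]; exact hp₀P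
    · rw [smul_eq_mul, mul_zero]; exact P.zero_mem
  have hιp₀M : ι p₀ ∉ M := by
    intro hcon
    apply hp₀
    have h2 : p₀ ∈ Ideal.comap ι M := Ideal.mem_comap.mpr hcon
    rwa [hbot, Ideal.mem_bot] at h2
  have hMT : M ⊔ T = ⊤ := by
    rcases lt_or_eq_of_le (le_sup_left : M ≤ M ⊔ T) with hlt | heq
    · exact hM.out.2 _ hlt
    · exact absurd ((le_sup_right.trans heq.ge) hιp₀T) hιp₀M
  have h1MT : (1:S) ∈ M ⊔ T := by rw [hMT]; exact Submodule.mem_top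
  obtain ⟨h₁, hh₁, t₁, ht₁, hht⟩ := Submodule.mem_sup.mp h1MT
  have main : ∀ m : ℕ, ∀ h : S, h ∈ M → (∀ i, m < i → b.repr h i = 0) →
      (∀ i, i ≠ 0 → b.repr h i ∈ P) → b.repr h 0 ∉ P → False := by
    intro m
    induction m with
    | zero =>
      intro h hhM hbound hcoef h0
      have hcst := hconst h (fun i hi => hbound i hi)
      have hmem : b.repr h 0 ∈ Ideal.comap ι M := Ideal.mem_comap.mpr (by rw [← hcst]; exact hhM)
      rw [hbot, Ideal.mem_bot] at hmem
      rw [hmem] at h0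
      exact h0 P.zero_mem
    | succ m ih =>
      intro h hhM hbound hcoef h0
      by_cases hq : b.repr h (m+1) = 0
      · refine ih h hhM ?_ hcoef h0
        intro i hi
        rcases eq_or_lt_of_le (Nat.succ_le_of_lt hi) with heq | hlt
        · rw [← heq]; exact hq
        · exact hbound i hlt
      · have hqJ : b.repr h (m+1) ∈ J (m+1) :=
          (hJmem _ _).mpr ⟨h, hhM, rfl, fun i hi => hbound i (by omega)⟩
        have hJne : J (m+1) ≠ ⊥ := by
          intro hbb
          rw [hbb, Submodule.mem_bot] at hqJ
          exact hq hqJ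
        obtain ⟨y, hy, p, hp, hyp⟩ := hgood (m+1) hJne
        haveI : (J (m+1)).IsPrincipal := hpl _
        set cm : R := Submodule.IsPrincipal.generator (J (m+1)) with hcmdef
        have hcmspan : Ideal.span {cm} = J (m+1) := Ideal.span_singleton_generator _
        obtain ⟨r, hr⟩ := Ideal.mem_span_singleton'.mp
          (show b.repr h (m+1) ∈ Ideal.span {cm} by rw [hcmspan]; exact hqJ)
        obtain ⟨w, hw⟩ := Ideal.mem_span_singleton'.mp
          (show y ∈ Ideal.span {cm} by rw [hcmspan]; exact hy)
        have hrP : r ∈ P := ore_cancel_mod hpl P cm w p hp (by rw [hw]; exact hyp) r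
          (by rw [hr]; exact hcoef (m+1) (Nat.succ_ne_zero m))
        obtain ⟨g, hgM, hgc, hgt⟩ := (hJmem (m+1) cm).mp (Submodule.IsPrincipal.generator_mem _)
        have hrepr' : ∀ i, b.repr (h - ι r * g) i = b.repr h i - r * b.repr g i := by
          intro i
          rw [map_sub, Finsupp.sub_apply, crmul]
        refine ih (h - ι r * g) (Submodule.sub_mem M hhM (M.mul_mem_left (ι r) hgM)) ?_ ?_ ?_
        · intro i hi
          rcases eq_or_lt_of_le (Nat.succ_le_of_lt hi) with heq | hlt
          · rw [hrepr', ← heq, hgc, hr]; exact sub_self _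
          · rw [hrepr', hbound i hlt, hgt i hlt, mul_zero, sub_zero]
        · intro i hi
          rw [hrepr']
          exact P.sub_mem (hcoef i hi) (P.mul_mem_right _ _ hrP)
        · intro hmem
          apply h0
          have hdec : b.repr h 0 = b.repr (h - ι r * g) 0 + r * b.repr g 0 := by
            rw [hrepr']; abel
          rw [hdec]
          exact P.add_mem hmem (P.mul_mem_right _ _ hrP)
  have h1r : b.repr (1:S) = Finsupp.single 0 1 := by
    rw [show (1:S) = b 0 by rw [hb 0, pow_zero], b.repr_self]
  have hform : h₁ = 1 - t₁ := by rw [← hht]; abel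
  refine main ((b.repr h₁).support.sup id) h₁ hh₁ ?_ ?_ ?_
  · intro i hi
    by_contra hne0
    have h2 : i ∈ (b.repr h₁).support := Finsupp.mem_support_iff.mpr hne0
    have h3 := Finset.le_sup (f := id) h2
    simp only [id] at h3
    omega
  · intro i hi
    rw [hform, map_sub, Finsupp.sub_apply, h1r, Finsupp.single_eq_of_ne hi, zero_sub]
    exact P.neg_mem ((hTmem t₁).mp ht₁ i)
  · intro hmem
    rw [hform, map_sub, Finsupp.sub_apply, h1r, Finsupp.single_eq_same] at hmem
    have h1P : (1:R) ∈ P := by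
      have h2 := P.add_mem hmem ((hTmem t₁).mp ht₁ 0)
      rwa [sub_add_cancel] at h2
    exact hPco.1 (TwoSidedIdeal.eq_top P h1P)
end

section
/- Let R be a commutative principal ideal domain with only finitely many maximal ideals (and not a field). Then there exists a maximal ideal M of the polynomial ring R[x] with M ∩ R = 0. -/
open Polynomial

/-- Let `R` be a commutative principal ideal domain which is not a field and has only
finitely many maximal ideals. Then there is a maximal ideal `M` of the polynomial ring
`R[x]` with `M ∩ R = 0`. -/
theorem exists_maximal_comap_eq_bot {R : Type*} [CommRing R] [IsDomain R]
    [IsPrincipalIdealRing R] (hnf : ¬ IsField R)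
    (hfin : {I : Ideal R | I.IsMaximal}.Finite) :
    ∃ M : Ideal (Polynomial R), M.IsMaximal ∧ ∀ r : R, Polynomial.C r ∈ M → r = 0 := by
  classical
  set K := FractionRing R
  set c : R := ∏ I ∈ hfin.toFinset, Submodule.IsPrincipal.generator (I : Ideal R) with hc
  have hgen_ne : ∀ I ∈ hfin.toFinset, Submodule.IsPrincipal.generator (I : Ideal R) ≠ 0 := by
    intro I hI hg
    have hIm : I.IsMaximal := hfin.mem_toFinset.mp hI
    have hIbot : I ≠ ⊥ := Ring.ne_bot_of_isMaximal_of_not_isField hIm hnf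
    apply hIbot
    rw [← Ideal.span_singleton_generator I, hg, Ideal.span_singleton_eq_bot]
  have hc0 : c ≠ 0 := Finset.prod_ne_zero_iff.mpr hgen_ne
  -- every prime divides c
  have hpdvd : ∀ p : R, Prime p → p ∣ c := by
    intro p hp
    have hmax : (Ideal.span {p}).IsMaximal :=
      PrincipalIdealRing.isMaximal_of_irreducible hp.irreducible
    have hmem : Ideal.span {p} ∈ hfin.toFinset := hfin.mem_toFinset.mpr hmax
    have hcI : c ∈ Ideal.span {p} := by
      have hg : Submodule.IsPrincipal.generator (Ideal.span {p} : Ideal R)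
          ∈ (Ideal.span {p} : Ideal R) := Submodule.IsPrincipal.generator_mem _
      obtain ⟨t, ht⟩ := Finset.dvd_prod_of_mem
        (fun I => Submodule.IsPrincipal.generator (I : Ideal R)) hmem
      rw [hc, ht]
      exact Ideal.mul_mem_right _ _ hg
    exact (Ideal.mem_span_singleton).mp hcI
  -- every nonzero element divides a power of c
  have hdvd : ∀ b : R, b ≠ 0 → ∃ n : ℕ, b ∣ c ^ n := by
    intro b hb
    induction b using UniqueFactorizationMonoid.induction_on_prime with
    | h₁ => exact absurd rfl hb
    | h₂ x hx => exact ⟨0, hx.dvd⟩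
    | h₃ a p ha hp ih =>
      obtain ⟨n, hn⟩ := ih ha
      exact ⟨n + 1, by rw [pow_succ, mul_comm (c ^ n) c]; exact mul_dvd_mul (hpdvd p hp) hn⟩
  have hcK : (algebraMap R K) c ≠ 0 := by
    simpa using (IsFractionRing.to_map_eq_zero_iff (K := K)).not.mpr hc0
  let φ : Polynomial R →ₐ[R] K := aeval ((algebraMap R K c)⁻¹)
  have hsurj : Function.Surjective φ := by
    intro x
    obtain ⟨a, b, hbnz, hx⟩ := IsFractionRing.div_surjective (A := R) x
    have hb0 : b ≠ 0 := nonZeroDivisors.ne_zero hbnz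
    obtain ⟨n, d, hd⟩ := hdvd b hb0
    have hbK : (algebraMap R K) b ≠ 0 := by
      simpa using (IsFractionRing.to_map_eq_zero_iff (K := K)).not.mpr hb0
    refine ⟨C (a * d) * X ^ n, ?_⟩
    have : φ (C (a * d) * X ^ n)
        = algebraMap R K (a * d) * ((algebraMap R K c)⁻¹) ^ n := by
      simp [φ]
    rw [this, ← hx]
    have hcn : (algebraMap R K) (c ^ n) = (algebraMap R K) b * (algebraMap R K) d := by
      rw [← map_mul, ← hd]
    have hdK : (algebraMap R K) d ≠ 0 := by
      intro h; apply pow_ne_zero n hcK; rw [← map_pow, hcn, h, mul_zero]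
    rw [inv_pow, ← map_pow, hcn, map_mul]
    rw [mul_inv, div_eq_mul_inv, mul_comm ((algebraMap R K) b)⁻¹ _, ← mul_assoc,
      mul_assoc ((algebraMap R K) a), mul_inv_cancel₀ hdK, mul_one]
  refine ⟨RingHom.ker (φ : Polynomial R →+* K),
    RingHom.ker_isMaximal_of_surjective _ hsurj, ?_⟩
  intro r hr
  have : algebraMap R K r = 0 := by
    have := RingHom.mem_ker.mp hr
    simpa [φ] using this
  exact (IsFractionRing.to_map_eq_zero_iff (K := K)).mp this
end

section
/- Let D be a division ring, σ : D → D an automorphism, and δ : D → D a σ-derivation. If the center of the Ore extension D[x; σ, δ] contains a nonconstant polynomial, then D[x; σ, δ] has infinitely many distinct maximal two-sided ideals. -/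
section OreAux

variable {D S : Type*} [DivisionRing D] [Ring S]
variable (σ : D ≃+* D) (ι : D →+* S) (x : S) (C : S →+ (ℕ →₀ D))

private lemma oreE (hC2 : ∀ (a : D) (s : S), C (ι a * s) = a • C s)
    (hC3 : ∀ i, C (x ^ i) = Finsupp.single i 1) (a : D) (i : ℕ) :
    C (ι a * x ^ i) = Finsupp.single i a := by
  rw [hC2, hC3, Finsupp.smul_single, smul_eq_mul, mul_one]

private lemma oreY
    (hrel : ∀ a : D, ∃ d : D, x * ι a = ι (σ a) * x + ι d)
    (hC2 : ∀ (a : D) (s : S), C (ι a * s) = a • C s)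
    (hC3 : ∀ i, C (x ^ i) = Finsupp.single i 1)
    (hC5 : ∀ s : S, s = (C s).sum fun i a => ι a * x ^ i)
    (t : S) (n : ℕ) (ht : ∀ k, n < k → C t k = 0) :
    (∀ k, n + 1 < k → C (x * t) k = 0) ∧ C (x * t) (n + 1) = σ (C t n) := by
  choose δ' hδ' using hrel
  have h1 : x * t = (C t).sum fun j a => ι (σ a) * x ^ (j + 1) + ι (δ' a) * x ^ j := by
    conv_lhs => rw [hC5 t, Finsupp.mul_sum]
    exact Finsupp.sum_congr fun j _ => by
      rw [← mul_assoc, hδ', add_mul, mul_assoc (ι (σ (C t j))), ← pow_succ']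
  have key : C (x * t) = (C t).sum fun j a =>
      Finsupp.single (j + 1) (σ a) + Finsupp.single j (δ' a) := by
    rw [h1, map_finsuppSum]
    exact Finsupp.sum_congr fun j _ => by
      rw [map_add, oreE ι x C hC2 hC3, oreE ι x C hC2 hC3]
  have hsupp : ∀ j ∈ (C t).support, j ≤ n := fun j hj => by
    by_contra h
    exact (Finsupp.mem_support_iff.mp hj) (ht j (by omega))
  constructor
  · intro k hk
    rw [key, Finsupp.sum_apply, Finsupp.sum]
    refine Finset.sum_eq_zero fun j hj => ?_
    have hjn := hsupp j hj
    rw [Finsupp.add_apply, Finsupp.single_eq_of_ne (by omega),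
      Finsupp.single_eq_of_ne (by omega), add_zero]
  · rw [key, Finsupp.sum_apply, Finsupp.sum]
    refine (Finset.sum_eq_single n (fun j hj hjn => ?_) (fun hn => ?_)).trans ?_
    · have hjn' := hsupp j hj
      rw [Finsupp.add_apply, Finsupp.single_eq_of_ne (by omega),
        Finsupp.single_eq_of_ne (by omega), add_zero]
    · rw [Finsupp.notMem_support_iff.mp hn]
      simp
    · rw [Finsupp.add_apply, Finsupp.single_eq_same, Finsupp.single_eq_of_ne (by omega), add_zero]

private lemma oreX
    (hrel : ∀ a : D, ∃ d : D, x * ι a = ι (σ a) * x + ι d)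
    (hC2 : ∀ (a : D) (s : S), C (ι a * s) = a • C s)
    (hC3 : ∀ i, C (x ^ i) = Finsupp.single i 1)
    (hC5 : ∀ s : S, s = (C s).sum fun i a => ι a * x ^ i) :
    ∀ (i : ℕ) (t : S) (n : ℕ), (∀ k, n < k → C t k = 0) →
      (∀ k, i + n < k → C (x ^ i * t) k = 0) ∧ C (x ^ i * t) (i + n) = (⇑σ)^[i] (C t n) := by
  intro i
  induction i with
  | zero =>
    intro t n ht
    constructor
    · intro k hk
      rw [pow_zero, one_mul]
      exact ht k (by omega)
    · rw [pow_zero, one_mul, Function.iterate_zero_apply, zero_add]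
  | succ i ih =>
    intro t n ht
    have hY := oreY σ ι x C hrel hC2 hC3 hC5 t n ht
    have h' := ih (x * t) (n + 1) hY.1
    have heq : x ^ (i + 1) * t = x ^ i * (x * t) := by rw [pow_succ, mul_assoc]
    constructor
    · intro k hk
      rw [heq]
      exact h'.1 k (by omega)
    · have h2 : i + 1 + n = i + (n + 1) := by omega
      rw [heq, h2, h'.2, hY.2, Function.iterate_succ_apply]

private lemma oreMul
    (hrel : ∀ a : D, ∃ d : D, x * ι a = ι (σ a) * x + ι d)
    (hC2 : ∀ (a : D) (s : S), C (ι a * s) = a • C s)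
    (hC3 : ∀ i, C (x ^ i) = Finsupp.single i 1)
    (hC5 : ∀ s : S, s = (C s).sum fun i a => ι a * x ^ i)
    (s t : S) (m n : ℕ)
    (hs : ∀ k, m < k → C s k = 0) (ht : ∀ k, n < k → C t k = 0) :
    (∀ k, m + n < k → C (s * t) k = 0) ∧
      C (s * t) (m + n) = C s m * (⇑σ)^[m] (C t n) := by
  have h1 : s * t = (C s).sum fun i a => ι a * (x ^ i * t) := by
    conv_lhs => rw [hC5 s, Finsupp.sum_mul]
    exact Finsupp.sum_congr fun i _ => (mul_assoc _ _ _)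
  have key : C (s * t) = (C s).sum fun i a => a • C (x ^ i * t) := by
    rw [h1, map_finsuppSum]
    exact Finsupp.sum_congr fun i _ => hC2 _ _
  have hsupp : ∀ i ∈ (C s).support, i ≤ m := fun i hi => by
    by_contra h
    exact Finsupp.mem_support_iff.mp hi (hs i (by omega))
  have hX := oreX σ ι x C hrel hC2 hC3 hC5
  constructor
  · intro k hk
    rw [key, Finsupp.sum_apply, Finsupp.sum]
    refine Finset.sum_eq_zero fun i hi => ?_
    rw [Finsupp.smul_apply, (hX i t n ht).1 k (by have := hsupp i hi; omega), smul_zero]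
  · rw [key, Finsupp.sum_apply, Finsupp.sum]
    refine (Finset.sum_eq_single m (fun i hi him => ?_) (fun hm => ?_)).trans ?_
    · rw [Finsupp.smul_apply, (hX i t n ht).1 (m + n) (by have h := hsupp i hi; omega), smul_zero]
    · rw [Finsupp.notMem_support_iff.mp hm, zero_smul, Finsupp.coe_zero, Pi.zero_apply]
    · rw [Finsupp.smul_apply, (hX m t n ht).2, smul_eq_mul]

end OreAux


private lemma oreCoatom {R : Type*} [Ring R] (I : TwoSidedIdeal R) (hI : (1 : R) ∉ I) :
    ∃ M : TwoSidedIdeal R, IsCoatom M ∧ I ≤ M := by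
  have hchainub : ∀ c ⊆ {J : TwoSidedIdeal R | (1 : R) ∉ J}, IsChain (· ≤ ·) c →
      ∀ y ∈ c, ∃ ub ∈ {J : TwoSidedIdeal R | (1 : R) ∉ J}, ∀ z ∈ c, z ≤ ub := by
    intro c hcs hchain y hy
    refine ⟨TwoSidedIdeal.mk' (⋃ J ∈ c, (J : Set R)) ?_ ?_ ?_ ?_ ?_, ?_, ?_⟩
    · exact Set.mem_biUnion hy (TwoSidedIdeal.zero_mem y)
    · rintro a b ha hb
      obtain ⟨_, ⟨J₁, rfl⟩, _, ⟨hJ₁, rfl⟩, haJ⟩ := ha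
      obtain ⟨_, ⟨J₂, rfl⟩, _, ⟨hJ₂, rfl⟩, hbJ⟩ := hb
      rcases hchain.total hJ₁ hJ₂ with h | h
      · exact Set.mem_biUnion hJ₂ (TwoSidedIdeal.add_mem _ (h haJ) hbJ)
      · exact Set.mem_biUnion hJ₁ (TwoSidedIdeal.add_mem _ haJ (h hbJ))
    · rintro a ha
      obtain ⟨_, ⟨J₁, rfl⟩, _, ⟨hJ₁, rfl⟩, haJ⟩ := ha
      exact Set.mem_biUnion hJ₁ (TwoSidedIdeal.neg_mem _ haJ)
    · rintro a b hb
      obtain ⟨_, ⟨J₁, rfl⟩, _, ⟨hJ₁, rfl⟩, hbJ⟩ := hb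
      exact Set.mem_biUnion hJ₁ (TwoSidedIdeal.mul_mem_left _ _ _ hbJ)
    · rintro a b ha
      obtain ⟨_, ⟨J₁, rfl⟩, _, ⟨hJ₁, rfl⟩, haJ⟩ := ha
      exact Set.mem_biUnion hJ₁ (TwoSidedIdeal.mul_mem_right _ _ _ haJ)
    · intro h1
      rw [TwoSidedIdeal.mem_mk'] at h1
      obtain ⟨_, ⟨J₁, rfl⟩, _, ⟨hJ₁, rfl⟩, h⟩ := h1
      exact hcs hJ₁ h
    · intro z hz
      rw [TwoSidedIdeal.le_iff, TwoSidedIdeal.coe_mk']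
      exact fun r hr => Set.mem_biUnion hz hr
  obtain ⟨M, hIM, hM1, hmax⟩ :=
    zorn_le_nonempty₀ {J : TwoSidedIdeal R | (1 : R) ∉ J} hchainub I hI
  refine ⟨M, ⟨fun htop => hM1 (htop ▸ TwoSidedIdeal.mem_top (R := R)), fun J hMJ => ?_⟩, hIM⟩
  by_contra hJ
  have hJ1 : (1 : R) ∉ J := fun h => hJ (TwoSidedIdeal.one_mem_iff J |>.mp h)
  exact absurd (hmax hJ1 hMJ.le) (not_le_of_gt hMJ)

private lemma oreMaxIdeal {R : Type*} [Ring R] (a : R) (hcomm : ∀ w : R, w * a = a * w)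
    (hnu : ∀ u : R, u * a ≠ 1) : ∃ M : TwoSidedIdeal R, IsCoatom M ∧ a ∈ M := by
  set I : TwoSidedIdeal R := TwoSidedIdeal.mk' {r : R | ∃ u : R, r = u * a}
      ⟨0, (zero_mul _).symm⟩
      (by rintro p c ⟨u, rfl⟩ ⟨v, rfl⟩; exact ⟨u + v, (add_mul u v a).symm⟩)
      (by rintro p ⟨u, rfl⟩; exact ⟨-u, (neg_mul u a).symm⟩)
      (by rintro w r ⟨u, rfl⟩; exact ⟨w * u, (mul_assoc w u a).symm⟩)
      (by rintro r w ⟨u, rfl⟩; exact ⟨u * w, by rw [mul_assoc, mul_assoc, ← hcomm w]⟩)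
      with hIdef
  have hmem : a ∈ I := by
    rw [hIdef, TwoSidedIdeal.mem_mk']
    exact ⟨1, (one_mul _).symm⟩
  have h1 : (1 : R) ∉ I := by
    rw [hIdef, TwoSidedIdeal.mem_mk']
    rintro ⟨u, hu⟩
    exact hnu u hu.symm
  obtain ⟨M, hM, hIM⟩ := oreCoatom I h1
  exact ⟨M, hM, TwoSidedIdeal.le_iff.mp hIM hmem⟩


/-- Let `D` be a division ring, `σ` an automorphism of `D`, `δ` a `σ`-derivation, and
`S = D[x; σ, δ]` the Ore extension (free left `D`-module with basis `1, x, x², …` and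
`x·a = σ(a)·x + δ(a)`). If the center of `S` contains a nonconstant polynomial (an element
not in `D`), then `S` has infinitely many distinct maximal two-sided ideals. -/
theorem oreExtension_infinite_maximal_of_central {D S : Type*} [DivisionRing D] [Ring S]
    (σ : D ≃+* D) (δ : D → D)
    (hδadd : ∀ a b : D, δ (a + b) = δ a + δ b)
    (hδmul : ∀ a b : D, δ (a * b) = σ a * δ b + δ a * b)
    (ι : D →+* S) (x : S)
    (b : @Module.Basis ℕ D S _ _ (Module.compHom S ι)) (hb : ∀ i : ℕ, b i = x ^ i)
    (hrel : ∀ a : D, x * ι a = ι (σ a) * x + ι (δ a))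
    (hcen : ∃ f : S, f ∈ Subring.center S ∧ f ∉ Set.range ι) :
    {I : TwoSidedIdeal S | IsCoatom I}.Infinite := by
  classical
  letI : Module D S := Module.compHom S ι
  obtain ⟨f, hfc, hfr⟩ := hcen
  set C : S →+ (ℕ →₀ D) := b.repr.toLinearMap.toAddMonoidHom with hCdef
  have hCval : ∀ s : S, C s = b.repr s := fun s => rfl
  have hC2 : ∀ (a : D) (s : S), C (ι a * s) = a • C s := by
    intro a s
    have h : ι a * s = a • s := rfl
    rw [h, hCval, hCval, map_smul]
  have hC3 : ∀ i, C (x ^ i) = Finsupp.single i 1 := by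
    intro i; rw [hCval, ← hb i, b.repr_self]
  have hC4 : ∀ s : S, C s = 0 → s = 0 := by
    intro s h
    exact (b.repr.map_eq_zero_iff).mp h
  have hC5 : ∀ s : S, s = (C s).sum fun i a => ι a * x ^ i := by
    intro s
    rw [hCval s]
    conv_lhs => rw [← b.linearCombination_repr s]
    rw [Finsupp.linearCombination_apply]
    refine Finsupp.sum_congr fun i _ => ?_
    rw [hb i]
    rfl
  have hrel' : ∀ a : D, ∃ d : D, x * ι a = ι (σ a) * x + ι d := fun a => ⟨δ a, hrel a⟩
  clear hrel hδadd hδmul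
  have hC1 : C 1 = Finsupp.single 0 1 := by
    have h := oreE ι x C hC2 hC3 1 0
    rw [map_one, pow_zero, mul_one] at h
    exact h
  have hone : (1 : S) ≠ 0 := by
    intro h
    have h2 : C (1 : S) 0 = C (0 : S) 0 := by rw [h]
    have hz : C (0 : S) = 0 := map_zero C
    rw [hC1, Finsupp.single_eq_same, hz] at h2
    exact one_ne_zero (h2.trans rfl)
  have hiter : ∀ (m : ℕ) (y : D), y ≠ 0 → (⇑σ)^[m] y ≠ 0 := by
    intro m
    induction m with
    | zero => intro y hy; simpa using hy
    | succ m ih =>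
      intro y hy
      rw [Function.iterate_succ_apply]
      refine ih (σ y) fun h => hy ?_
      exact σ.injective (h.trans (map_zero σ).symm)
  have hdeg : ∀ s : S, s ≠ 0 → ∃ m, (∀ k, m < k → C s k = 0) ∧ C s m ≠ 0 := by
    intro s hs
    have hne : (C s).support.Nonempty := by
      rw [Finsupp.support_nonempty_iff]
      exact fun h => hs (hC4 s h)
    refine ⟨(C s).support.max' hne, fun k hk => ?_, ?_⟩
    · by_contra h
      exact absurd (Finset.le_max' _ k (Finsupp.mem_support_iff.mpr h)) (by omega)
    · exact Finsupp.mem_support_iff.mp ((C s).support.max'_mem hne)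
  have hf0 : f ≠ 0 := fun h => hfr ⟨0, by rw [map_zero, h]⟩
  obtain ⟨N, hNb, hNne⟩ := hdeg f hf0
  have hN1 : 1 ≤ N := by
    rcases Nat.eq_zero_or_pos N with h | h
    · subst h
      exfalso
      apply hfr
      have hCf : C f = Finsupp.single 0 (C f 0) := by
        ext k
        cases k with
        | zero => rw [Finsupp.single_eq_same]
        | succ k => rw [hNb (k + 1) (by omega), Finsupp.single_eq_of_ne (by omega)]
      refine ⟨C f 0, ?_⟩
      have h5 := hC5 f
      rw [hCf] at h5
      rw [Finsupp.sum_single_index (by simp)] at h5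
      rw [pow_zero, mul_one] at h5
      exact h5.symm
    · omega
  -- the auxiliary sequences
  let q : ℕ → S := fun n => Nat.rec (motive := fun _ => S) f (fun _ qn => qn * (qn + 1)) n
  have hq0 : q 0 = f := rfl
  have hqs : ∀ n, q (n + 1) = q n * (q n + 1) := fun n => rfl
  let g : ℕ → S := fun n => Nat.casesOn n f (fun m => q m + 1)
  have hg0 : g 0 = f := rfl
  have hgs : ∀ n, g (n + 1) = q n + 1 := fun n => rfl
  have hqcen : ∀ n, q n ∈ Subring.center S := by
    intro n
    induction n with
    | zero => exact hfc
    | succ n ih =>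
      rw [hqs n]
      exact Subring.mul_mem _ ih (Subring.add_mem _ ih (Subring.one_mem _))
  have hgcen : ∀ n, g n ∈ Subring.center S := by
    intro n
    cases n with
    | zero => exact hfc
    | succ n => rw [hgs n]; exact Subring.add_mem _ (hqcen n) (Subring.one_mem _)
  -- add-one helper
  have haddone : ∀ (s : S) (d : ℕ), 1 ≤ d → (∀ k, d < k → C s k = 0) → C s d ≠ 0 →
      (∀ k, d < k → C (s + 1) k = 0) ∧ C (s + 1) d ≠ 0 := by
    intro s d hd1 hdb hdne
    constructor
    · intro k hk
      rw [map_add, Finsupp.add_apply, hdb k hk, hC1, Finsupp.single_eq_of_ne (by omega), add_zero]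
    · rw [map_add, Finsupp.add_apply, hC1, Finsupp.single_eq_of_ne (by omega), add_zero]
      exact hdne
  have hqdeg : ∀ n, ∃ d, 1 ≤ d ∧ (∀ k, d < k → C (q n) k = 0) ∧ C (q n) d ≠ 0 := by
    intro n
    induction n with
    | zero => exact ⟨N, hN1, hNb, hNne⟩
    | succ n ih =>
      obtain ⟨d, hd1, hdb, hdne⟩ := ih
      obtain ⟨hb1, hb2⟩ := haddone (q n) d hd1 hdb hdne
      have hmul := oreMul σ ι x C hrel' hC2 hC3 hC5 (q n) (q n + 1) d d hdb hb1
      refine ⟨d + d, by omega, ?_, ?_⟩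
      · intro k hk
        rw [hqs n]
        exact hmul.1 k hk
      · rw [hqs n, hmul.2]
        exact mul_ne_zero hdne (hiter d _ hb2)
  have hgdeg : ∀ n, ∃ d, 1 ≤ d ∧ (∀ k, d < k → C (g n) k = 0) ∧ C (g n) d ≠ 0 := by
    intro n
    cases n with
    | zero => exact ⟨N, hN1, hNb, hNne⟩
    | succ n =>
      obtain ⟨d, hd1, hdb, hdne⟩ := hqdeg n
      obtain ⟨hb1, hb2⟩ := haddone (q n) d hd1 hdb hdne
      refine ⟨d, hd1, ?_, ?_⟩
      · intro k hk; rw [hgs n]; exact hb1 k hk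
      · rw [hgs n]; exact hb2
  have hnotunit : ∀ n (u : S), u * g n ≠ 1 := by
    intro n u hu
    obtain ⟨d, hd1, hdb, hdne⟩ := hgdeg n
    have hu0 : u ≠ 0 := by
      rintro rfl
      rw [zero_mul] at hu
      exact hone hu.symm
    obtain ⟨m, hmb, hmne⟩ := hdeg u hu0
    have hmul := oreMul σ ι x C hrel' hC2 hC3 hC5 u (g n) m d hmb hdb
    have hne : C (u * g n) (m + d) ≠ 0 := by
      rw [hmul.2]
      exact mul_ne_zero hmne (hiter m _ hdne)
    apply hne
    rw [hu, hC1, Finsupp.single_eq_of_ne (by omega)]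
  have hMex : ∀ n, ∃ M : TwoSidedIdeal S, IsCoatom M ∧ g n ∈ M := by
    intro n
    exact oreMaxIdeal (g n) (Subring.mem_center_iff.mp (hgcen n)) (fun u hu => hnotunit n u hu)
  have hqdvd : ∀ n m, n ≤ m → ∃ r, q m = q n * r := by
    intro n m hnm
    induction m with
    | zero =>
      obtain rfl : n = 0 := by omega
      exact ⟨1, (mul_one _).symm⟩
    | succ m ih =>
      by_cases h : n = m + 1
      · subst h; exact ⟨1, (mul_one _).symm⟩
      · obtain ⟨r, hr⟩ := ih (by omega)
        exact ⟨r * (q m + 1), by rw [hqs m, hr, mul_assoc]⟩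
  have hdiv : ∀ i j, i < j → ∃ r, g j = g i * r + 1 := by
    intro i j hij
    obtain ⟨j', rfl⟩ : ∃ j', j = j' + 1 := ⟨j - 1, by omega⟩
    cases i with
    | zero =>
      obtain ⟨r, hr⟩ := hqdvd 0 j' (by omega)
      exact ⟨r, by rw [hgs j', hr, hq0, hg0]⟩
    | succ i' =>
      obtain ⟨r, hr⟩ := hqdvd (i' + 1) j' (by omega)
      refine ⟨q i' * r, ?_⟩
      rw [hgs j', hr, hqs i', hgs i']
      have hcsw : q i' * (q i' + 1) = (q i' + 1) * q i' := by
        rw [mul_add, mul_one, add_mul, one_mul]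
      rw [hcsw, mul_assoc]
  choose M hM1 hM2 using hMex
  have hlt : ∀ i j, i < j → M i ≠ M j := by
    intro i j hij heq
    obtain ⟨r, hr⟩ := hdiv i j hij
    have h2 : g j ∈ M i := heq ▸ hM2 j
    have h3 : g i * r ∈ M i := TwoSidedIdeal.mul_mem_right _ _ _ (hM2 i)
    have h4 : (1 : S) ∈ M i := by
      have h5 := TwoSidedIdeal.sub_mem _ h2 h3
      rw [hr] at h5
      simpa using h5
    exact (hM1 i).1 ((TwoSidedIdeal.one_mem_iff _).mp h4)
  have hinj : Function.Injective M := by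
    intro i j h
    by_contra hne
    rcases Nat.lt_or_ge i j with hlt' | hge
    · exact hlt i j hlt' h
    · exact hlt j i (by omega) h.symm
  exact Set.infinite_of_injective_forall_mem hinj hM1
end

section
/- Let D be a division ring, σ : D → D an automorphism and δ : D → D a σ-derivation with σδ = δσ. Then the ring D[x₁,…,xₙ; σ, δ], generated over D by x₁,…,xₙ subject to xᵢxⱼ = xⱼxᵢ and xᵢa = σ(a)xᵢ + δ(a) for all i, j and a ∈ D, is isomorphic to an iterated Ore extension D[x₁; σ₁, δ₁][x₂; σ₂, δ₂]⋯[xₙ; σₙ, δₙ], where each σⱼ restricts to σ on D and fixes x₁,…,x_{j−1}, and each δⱼ restricts to δ on D and vanishes on x₁,…,x_{j−1}. In particular, D[x₁,…,xₙ; σ, δ] is a free left D-module with basis the monomials x₁^{i₁}⋯xₙ^{iₙ}. -/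
set_option maxHeartbeats 1000000
set_option synthInstance.maxHeartbeats 400000

namespace IterOreAux

open Finsupp

variable {D : Type} [DivisionRing D] {n : ℕ}

abbrev V (D : Type) [DivisionRing D] (n : ℕ) : Type := (Fin n →₀ ℕ) →₀ D

variable (σ : D ≃+* D) (δ : D → D)
variable (hδadd : ∀ a b : D, δ (a + b) = δ a + δ b)
variable (hδmul : ∀ a b : D, δ (a * b) = σ a * δ b + δ a * b)

include hδadd in
lemma dzero : δ 0 = 0 := by
  have h := hδadd 0 0
  rw [add_zero] at h
  exact (left_eq_add.mp h)

include hδmul in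
lemma done : δ 1 = 0 := by
  have h := hδmul 1 1
  rw [mul_one, map_one, one_mul, mul_one, left_eq_add] at h
  exact h

/-- `δ` as an additive hom. -/
def dhom : D →+ D where
  toFun := δ
  map_zero' := dzero δ hδadd
  map_add' := hδadd

noncomputable def iotaFun (a : D) : AddMonoid.End (V D n) :=
  Finsupp.mapRange.addMonoidHom (AddMonoidHom.mulLeft a)

lemma iotaFun_single (a : D) (m : Fin n →₀ ℕ) (c : D) :
    iotaFun a (Finsupp.single m c) = Finsupp.single m (a * c) :=
  Finsupp.mapRange_single (hf := mul_zero a)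

/-- Left multiplication by elements of `D`, as a ring hom into `AddMonoid.End V`. -/
noncomputable def iotaE : D →+* AddMonoid.End (V D n) where
  toFun := iotaFun
  map_one' := by
    refine Finsupp.addHom_ext fun m c => ?_
    show iotaFun 1 (Finsupp.single m c) = Finsupp.single m c
    rw [iotaFun_single, one_mul]
  map_mul' a b := by
    refine Finsupp.addHom_ext fun m c => ?_
    show iotaFun (a * b) _ = iotaFun a (iotaFun b _)
    rw [iotaFun_single, iotaFun_single, iotaFun_single, mul_assoc]
  map_zero' := by
    refine Finsupp.addHom_ext fun m c => ?_
    show iotaFun 0 (Finsupp.single m c) = 0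
    rw [iotaFun_single, zero_mul, Finsupp.single_zero]
  map_add' a b := by
    refine Finsupp.addHom_ext fun m c => ?_
    show iotaFun (a + b) _ = iotaFun a _ + iotaFun b _
    rw [iotaFun_single, iotaFun_single, iotaFun_single, add_mul, Finsupp.single_add]

lemma iotaE_single (a : D) (m : Fin n →₀ ℕ) (c : D) :
    iotaE a (Finsupp.single m c) = Finsupp.single m (a * c) :=
  iotaFun_single a m c

lemma iotaE_inj : Function.Injective (iotaE (D := D) (n := n)) := by
  intro a b h
  have h2 := congrArg (fun e : AddMonoid.End (V D n) => e (Finsupp.single 0 1)) h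
  simp only [iotaE_single, mul_one] at h2
  exact Finsupp.single_injective (0 : Fin n →₀ ℕ) h2


lemma iotaE_apply_eq_smul (a : D) (w : V D n) : iotaE a w = a • w := by
  ext k
  show Finsupp.mapRange (a * ·) (mul_zero a) w k = _
  rw [Finsupp.mapRange_apply, Finsupp.smul_apply, smul_eq_mul]

/-- The skew variable `xⱼ` as an additive endomorphism of `V`. -/
noncomputable def Xop (j : Fin n) : AddMonoid.End (V D n) :=
  (Finsupp.mapDomain.addMonoidHom (· + Finsupp.single j 1)).comp
      (Finsupp.mapRange.addMonoidHom (σ : D →+* D).toAddMonoidHom)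
    + Finsupp.mapRange.addMonoidHom (dhom δ hδadd)

lemma Xop_single (j : Fin n) (m : Fin n →₀ ℕ) (c : D) :
    Xop σ δ hδadd j (Finsupp.single m c)
      = Finsupp.single (m + Finsupp.single j 1) (σ c) + Finsupp.single m (δ c) := by
  show Finsupp.mapDomain (· + Finsupp.single j 1)
      (Finsupp.mapRange σ (map_zero σ) (Finsupp.single m c))
      + Finsupp.mapRange δ (dzero δ hδadd) (Finsupp.single m c) = _
  rw [Finsupp.mapRange_single, Finsupp.mapDomain_single, Finsupp.mapRange_single]

/-- The variables commute pairwise. -/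
lemma Xop_comm (i j : Fin n) (hcomm : ∀ a : D, σ (δ a) = δ (σ a)) :
    Xop σ δ hδadd i * Xop σ δ hδadd j = Xop σ δ hδadd j * Xop σ δ hδadd i := by
  refine Finsupp.addHom_ext fun m c => ?_
  show Xop σ δ hδadd i (Xop σ δ hδadd j _) = Xop σ δ hδadd j (Xop σ δ hδadd i _)
  rw [Xop_single, Xop_single, map_add, map_add, Xop_single, Xop_single, Xop_single, Xop_single,
    hcomm, add_right_comm m (Finsupp.single j 1) (Finsupp.single i 1)]
  abel

include hδmul in
/-- The defining skew-commutation relation. -/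
lemma Xop_iotaE (j : Fin n) (a : D) :
    Xop σ δ hδadd j * iotaE a
      = iotaE (σ a) * Xop σ δ hδadd j + iotaE (δ a) := by
  refine Finsupp.addHom_ext fun m c => ?_
  show Xop σ δ hδadd j (iotaE a _) = iotaE (σ a) (Xop σ δ hδadd j _) + iotaE (δ a) _
  rw [iotaE_single, Xop_single, Xop_single, map_add, iotaE_single, iotaE_single, iotaE_single,
    hδmul, map_mul, Finsupp.single_add]
  abel

variable (hcomm : ∀ a : D, σ (δ a) = δ (σ a))

/-- The ordered monomial `x₁^{i₁} ⋯ xₙ^{iₙ}`. -/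
noncomputable def mon (i : Fin n →₀ ℕ) : AddMonoid.End (V D n) :=
  (List.ofFn fun j => Xop σ δ hδadd j ^ i j).prod

include hcomm in
lemma Xop_commute (i j : Fin n) :
    Commute (Xop σ δ hδadd i) (Xop σ δ hδadd j) :=
  Xop_comm σ δ hδadd i j hcomm

include hcomm in
lemma mon_comm_pairwise (f : Fin n → ℕ) :
    ((Finset.univ : Finset (Fin n)) : Set (Fin n)).Pairwise
      (Function.onFun Commute fun j => Xop σ δ hδadd j ^ f j) := by
  intro i _ j _ _
  exact (Xop_commute σ δ hδadd hcomm i j).pow_pow _ _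

lemma multiset_noncommProd_congr {α : Type} [Monoid α] {s t : Multiset α} (h : s = t) (hs ht) :
    s.noncommProd hs = t.noncommProd ht := by subst h; rfl

include hcomm in
lemma mon_eq_noncommProd (i : Fin n →₀ ℕ) :
    mon σ δ hδadd i
      = Finset.univ.noncommProd (fun j => Xop σ δ hδadd j ^ i j)
          (mon_comm_pairwise σ δ hδadd hcomm i) := by
  rw [mon, Finset.noncommProd,
    multiset_noncommProd_congr (Fin.univ_val_map (fun j => Xop σ δ hδadd j ^ i j)) _
      (show Set.Pairwise _ Commute from fun x hx y hy _ => by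
        simp only [Set.mem_setOf_eq, Multiset.mem_coe, List.mem_ofFn] at hx hy
        obtain ⟨a, rfl⟩ := hx; obtain ⟨b, rfl⟩ := hy
        exact (Xop_commute σ δ hδadd hcomm a b).pow_pow _ _),
    Multiset.noncommProd_coe]

include hcomm in
lemma mon_add (k l : Fin n →₀ ℕ) :
    mon σ δ hδadd (k + l) = mon σ δ hδadd k * mon σ δ hδadd l := by
  rw [mon_eq_noncommProd σ δ hδadd hcomm, mon_eq_noncommProd σ δ hδadd hcomm,
    mon_eq_noncommProd σ δ hδadd hcomm]
  have hgf : ((Finset.univ : Finset (Fin n)) : Set (Fin n)).Pairwise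
      (fun x y => Commute (Xop σ δ hδadd x ^ l x) (Xop σ δ hδadd y ^ k y)) :=
    fun i _ j _ _ => (Xop_commute σ δ hδadd hcomm i j).pow_pow _ _
  calc Finset.univ.noncommProd (fun j => Xop σ δ hδadd j ^ (k + l) j)
        (mon_comm_pairwise σ δ hδadd hcomm _)
      = Finset.univ.noncommProd
          ((fun j => Xop σ δ hδadd j ^ k j) * fun j => Xop σ δ hδadd j ^ l j)
          (Finset.noncommProd_mul_distrib_aux (mon_comm_pairwise σ δ hδadd hcomm k)
            (mon_comm_pairwise σ δ hδadd hcomm l) hgf) := by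
        refine Finset.noncommProd_congr rfl (fun j _ => ?_) _
        rw [Pi.mul_apply, Finsupp.add_apply, pow_add]
    _ = _ := Finset.noncommProd_mul_distrib _ _ _ _ hgf

include hcomm in
lemma mon_single (j : Fin n) (c : ℕ) :
    mon σ δ hδadd (Finsupp.single j c) = Xop σ δ hδadd j ^ c := by
  classical
  rw [mon_eq_noncommProd σ δ hδadd hcomm]
  refine Eq.trans (Finset.noncommProd_congr
      (Finset.insert_erase (Finset.mem_univ j)).symm (fun l _ => rfl)
      ((mon_comm_pairwise σ δ hδadd hcomm _).mono (by simp))) ?_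
  refine Eq.trans (Finset.noncommProd_insert_of_notMem _ _ _ _ (Finset.notMem_erase _ _)) ?_
  rw [Finset.noncommProd_eq_pow_card _ _ _ (1 : AddMonoid.End (V D n))
    (fun l hl => by
      rw [Finsupp.single_eq_of_ne (Finset.mem_erase.mp hl).1, pow_zero])]
  rw [one_pow, mul_one, Finsupp.single_eq_same]

lemma mon_zero : mon σ δ hδadd (0 : Fin n →₀ ℕ) = 1 := by
  rw [mon]
  apply List.prod_eq_one
  intro e he
  rw [List.mem_ofFn] at he
  obtain ⟨j, rfl⟩ := he
  simp

include hδmul in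
lemma Xop_pow_single_one (j : Fin n) (c : ℕ) (m : Fin n →₀ ℕ) :
    (Xop σ δ hδadd j ^ c) (Finsupp.single m 1)
      = Finsupp.single (m + Finsupp.single j c) 1 := by
  induction c generalizing m with
  | zero => simp
  | succ c ih =>
    rw [pow_succ']
    show Xop σ δ hδadd j ((Xop σ δ hδadd j ^ c) (Finsupp.single m 1)) = _
    rw [ih, Xop_single, map_one σ, done σ δ hδmul, Finsupp.single_zero, add_zero, add_assoc,
      ← Finsupp.single_add]

include hδmul hcomm in
lemma mon_vac (i : Fin n →₀ ℕ) :
    mon σ δ hδadd i (Finsupp.single 0 1) = Finsupp.single i 1 := by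
  induction i using Finsupp.induction with
  | zero => rw [mon_zero]; rfl
  | single_add j c f hjf hc ih =>
    rw [mon_add σ δ hδadd hcomm, mon_single σ δ hδadd hcomm]
    show (Xop σ δ hδadd j ^ c) (mon σ δ hδadd f (Finsupp.single 0 1)) = _
    rw [ih, Xop_pow_single_one σ δ hδadd hδmul, add_comm]

section Main

noncomputable local instance EMod : Module D (AddMonoid.End (V D n)) :=
  Module.compHom _ (iotaE (D := D) (n := n))

lemma hsmulE (d : D) (e : AddMonoid.End (V D n)) : d • e = iotaE d * e := rfl

/-- The span of the monomials. -/
noncomputable def P : Submodule D (AddMonoid.End (V D n)) :=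
  Submodule.span D (Set.range (mon σ δ hδadd))

lemma monP (i : Fin n →₀ ℕ) : mon σ δ hδadd i ∈ P (n := n) σ δ hδadd :=
  Submodule.subset_span ⟨i, rfl⟩

lemma oneP : (1 : AddMonoid.End (V D n)) ∈ P (n := n) σ δ hδadd := by
  have := monP (n := n) σ δ hδadd 0
  rwa [mon_zero σ δ hδadd] at this

lemma iotaP (a : D) : iotaE a ∈ P (n := n) σ δ hδadd := by
  have h : iotaE (D := D) (n := n) a = a • (1 : AddMonoid.End (V D n)) := by
    rw [hsmulE, mul_one]
  rw [h]; exact (P (n := n) σ δ hδadd).smul_mem a (oneP (n := n) σ δ hδadd)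

lemma iotaMulP (a : D) (p : AddMonoid.End (V D n)) (hp : p ∈ P (n := n) σ δ hδadd) :
    iotaE a * p ∈ P (n := n) σ δ hδadd := by
  rw [← hsmulE]; exact (P (n := n) σ δ hδadd).smul_mem a hp

include hcomm in
lemma XmonP (j : Fin n) (i : Fin n →₀ ℕ) :
    Xop σ δ hδadd j * mon σ δ hδadd i = mon σ δ hδadd (Finsupp.single j 1 + i) := by
  rw [mon_add σ δ hδadd hcomm, mon_single σ δ hδadd hcomm, pow_one]

include hδmul hcomm in
lemma XmulP (j : Fin n) (p : AddMonoid.End (V D n)) (hp : p ∈ P (n := n) σ δ hδadd) :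
    Xop σ δ hδadd j * p ∈ P (n := n) σ δ hδadd := by
  induction hp using Submodule.span_induction with
  | mem q hq =>
      obtain ⟨i, rfl⟩ := hq
      rw [XmonP (n := n) σ δ hδadd hcomm]
      exact monP (n := n) σ δ hδadd _
  | zero => rw [mul_zero]; exact (P (n := n) σ δ hδadd).zero_mem
  | add q r _ _ hq hr => rw [mul_add]; exact (P (n := n) σ δ hδadd).add_mem hq hr
  | smul a q hq' hq =>
      change Xop σ δ hδadd j * (iotaE a * q) ∈ _
      rw [← mul_assoc, Xop_iotaE σ δ hδadd hδmul, add_mul, mul_assoc]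
      exact (P (n := n) σ δ hδadd).add_mem (iotaMulP (n := n) σ δ hδadd _ _ hq) (iotaMulP (n := n) σ δ hδadd _ _ hq')

include hδmul hcomm in
lemma XpowMulP (j : Fin n) (c : ℕ) (p : AddMonoid.End (V D n)) (hp : p ∈ P (n := n) σ δ hδadd) :
    Xop σ δ hδadd j ^ c * p ∈ P (n := n) σ δ hδadd := by
  induction c with
  | zero => rwa [pow_zero, one_mul]
  | succ c ih =>
      rw [pow_succ', mul_assoc]
      exact XmulP (n := n) σ δ hδadd hδmul hcomm j _ ih

include hδmul hcomm in
lemma monMulP (i : Fin n →₀ ℕ) (p : AddMonoid.End (V D n)) (hp : p ∈ P (n := n) σ δ hδadd) :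
    mon σ δ hδadd i * p ∈ P (n := n) σ δ hδadd := by
  induction i using Finsupp.induction generalizing p with
  | zero => rwa [mon_zero σ δ hδadd, one_mul]
  | single_add j c f hjf hc ih =>
      rw [show mon σ δ hδadd (Finsupp.single j c + f)
            = Xop σ δ hδadd j ^ c * mon σ δ hδadd f by
          rw [mon_add σ δ hδadd hcomm, mon_single σ δ hδadd hcomm], mul_assoc]
      exact XpowMulP (n := n) σ δ hδadd hδmul hcomm j c _ (ih p hp)

include hδmul hcomm in
lemma mulP (p : AddMonoid.End (V D n)) (hp : p ∈ P (n := n) σ δ hδadd)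
    (q : AddMonoid.End (V D n)) (hq : q ∈ P (n := n) σ δ hδadd) : p * q ∈ P (n := n) σ δ hδadd := by
  induction hp using Submodule.span_induction with
  | mem r hr =>
      obtain ⟨i, rfl⟩ := hr
      exact monMulP (n := n) σ δ hδadd hδmul hcomm i q hq
  | zero => rw [zero_mul]; exact (P (n := n) σ δ hδadd).zero_mem
  | add r t _ _ hr ht => rw [add_mul]; exact (P (n := n) σ δ hδadd).add_mem hr ht
  | smul a r _ hr =>
      change iotaE a * r * q ∈ _
      rw [mul_assoc]
      exact iotaMulP (n := n) σ δ hδadd a _ hr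

include hδmul hcomm in
/-- The iterated Ore extension, realized as a subring of `AddMonoid.End V`. -/
noncomputable def Sr : Subring (AddMonoid.End (V D n)) where
  carrier := P (n := n) σ δ hδadd
  one_mem' := oneP (n := n) σ δ hδadd
  mul_mem' := fun {a b} ha hb => by exact mulP σ δ hδadd hδmul hcomm a ha b hb
  zero_mem' := by exact (P (n := n) σ δ hδadd).zero_mem
  add_mem' := fun {a b} ha hb => by exact (P (n := n) σ δ hδadd).add_mem ha hb
  neg_mem' := fun {a} ha => by
    have h2 := (P (n := n) σ δ hδadd).smul_mem (-1 : D) (by exact ha)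
    rwa [neg_one_smul D a] at h2

/-- The embedding of `D` into the iterated Ore extension. -/
noncomputable def iotaS : D →+* ↥(Sr (n := n) σ δ hδadd hδmul hcomm) :=
  RingHom.codRestrict (iotaE (D := D) (n := n)) _ (iotaP (n := n) σ δ hδadd)

lemma XmemS (j : Fin n) : Xop σ δ hδadd j ∈ Sr (n := n) σ δ hδadd hδmul hcomm := by
  have h := monP (n := n) σ δ hδadd (Finsupp.single j 1)
  rwa [mon_single σ δ hδadd hcomm, pow_one] at h

/-- The variables in the iterated Ore extension. -/
noncomputable def xS (j : Fin n) : ↥(Sr (n := n) σ δ hδadd hδmul hcomm) :=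
  ⟨Xop σ δ hδadd j, XmemS (n := n) σ δ hδadd hδmul hcomm j⟩

noncomputable local instance SMod : Module D ↥(Sr (n := n) σ δ hδadd hδmul hcomm) :=
  Module.compHom ↥(Sr (n := n) σ δ hδadd hδmul hcomm) (iotaS (n := n) σ δ hδadd hδmul hcomm)

/-- The monomials, as elements of the iterated Ore extension. -/
noncomputable def vS (i : Fin n →₀ ℕ) : ↥(Sr (n := n) σ δ hδadd hδmul hcomm) :=
  ⟨mon σ δ hδadd i, monP (n := n) σ δ hδadd i⟩

/-- The inclusion, as a `D`-linear map. -/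
noncomputable def inclS : ↥(Sr (n := n) σ δ hδadd hδmul hcomm) →ₗ[D] AddMonoid.End (V D n) where
  toFun := Subtype.val
  map_add' := fun _ _ => rfl
  map_smul' := fun _ _ => rfl

/-- Evaluation at the vacuum vector, as a `D`-linear map. -/
noncomputable def evS : AddMonoid.End (V D n) →ₗ[D] V D n where
  toFun := fun e => e (Finsupp.single 0 1)
  map_add' := fun _ _ => rfl
  map_smul' := fun d e => by
    show iotaE d (e (Finsupp.single 0 1)) = d • (e (Finsupp.single 0 1))
    exact iotaE_apply_eq_smul d _

lemma vS_li : LinearIndependent D (vS (n := n) σ δ hδadd hδmul hcomm) := by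
  apply LinearIndependent.of_comp ((evS (D := D) (n := n)).comp (inclS (n := n) σ δ hδadd hδmul hcomm))
  have hcomp : (((evS (D := D) (n := n)).comp (inclS (n := n) σ δ hδadd hδmul hcomm))
      ∘ (vS (n := n) σ δ hδadd hδmul hcomm)) = fun i => Finsupp.single i (1 : D) :=
    funext fun i => mon_vac σ δ hδadd hδmul hcomm i
  rw [hcomp]
  have := (Finsupp.basisSingleOne (R := D) (ι := Fin n →₀ ℕ)).linearIndependent
  rwa [Finsupp.coe_basisSingleOne] at this

lemma vS_span : ⊤ ≤ Submodule.span D (Set.range (vS (n := n) σ δ hδadd hδmul hcomm)) := by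
  have hPle : P (n := n) σ δ hδadd ≤ Submodule.map (inclS (n := n) σ δ hδadd hδmul hcomm)
      (Submodule.span D (Set.range (vS (n := n) σ δ hδadd hδmul hcomm))) := by
    rw [P, Submodule.span_le]
    rintro _ ⟨i, rfl⟩
    exact ⟨vS (n := n) σ δ hδadd hδmul hcomm i, Submodule.subset_span ⟨i, rfl⟩, rfl⟩
  intro s _
  obtain ⟨t, ht, hts⟩ := hPle s.2
  have hts' : t = s := Subtype.val_injective hts
  rwa [← hts']

/-- The monomial basis. -/
noncomputable def basisS : Module.Basis (Fin n →₀ ℕ) D ↥(Sr (n := n) σ δ hδadd hδmul hcomm) :=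
  Module.Basis.mk (vS_li (n := n) σ δ hδadd hδmul hcomm) (vS_span (n := n) σ δ hδadd hδmul hcomm)

lemma basisS_apply (i : Fin n →₀ ℕ) :
    basisS (n := n) σ δ hδadd hδmul hcomm i
      = (List.ofFn fun j => xS (n := n) σ δ hδadd hδmul hcomm j ^ i j).prod := by
  rw [basisS, Module.Basis.mk_apply]
  refine Subtype.ext ?_
  show mon σ δ hδadd i
      = ((List.ofFn fun j => xS (n := n) σ δ hδadd hδmul hcomm j ^ i j).prod
          : ↥(Sr (n := n) σ δ hδadd hδmul hcomm)).val
  have h1 : ((List.ofFn fun j => xS (n := n) σ δ hδadd hδmul hcomm j ^ i j).prod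
        : ↥(Sr (n := n) σ δ hδadd hδmul hcomm)).val
      = (Sr (n := n) σ δ hδadd hδmul hcomm).subtype
          ((List.ofFn fun j => xS (n := n) σ δ hδadd hδmul hcomm j ^ i j).prod) := rfl
  rw [h1, map_list_prod, List.map_ofFn]
  have h2 : (⇑(Sr (n := n) σ δ hδadd hδmul hcomm).subtype
        ∘ fun j => xS (n := n) σ δ hδadd hδmul hcomm j ^ i j)
      = fun j => Xop σ δ hδadd j ^ i j := by
    funext j
    show (Sr (n := n) σ δ hδadd hδmul hcomm).subtype (xS (n := n) σ δ hδadd hδmul hcomm j ^ i j) = _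
    rw [map_pow]
    rfl
  rw [h2]
  rfl

end Main

end IterOreAux

open IterOreAux in
/-- Let `D` be a division ring, `σ` an automorphism of `D` and `δ` a `σ`-derivation with
`σδ = δσ`. Then the ring `D[x₁,…,xₙ; σ, δ]` generated over `D` by `x₁,…,xₙ` subject to
`xᵢxⱼ = xⱼxᵢ` and `xᵢ·a = σ(a)·xᵢ + δ(a)` exists (equivalently, it is an iterated Ore
extension `D[x₁; σ₁, δ₁]⋯[xₙ; σₙ, δₙ]`): there is a ring `S` with an embedding `ι : D →+* S`
and elements `x₁,…,xₙ` satisfying the defining relations, which is a free left `D`-module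
with basis the ordered monomials `x₁^{i₁}⋯xₙ^{iₙ}`. -/
theorem iterated_ore_extension_exists (D : Type) [DivisionRing D] (n : ℕ)
    (σ : D ≃+* D) (δ : D → D)
    (hδadd : ∀ a b : D, δ (a + b) = δ a + δ b)
    (hδmul : ∀ a b : D, δ (a * b) = σ a * δ b + δ a * b)
    (hcomm : ∀ a : D, σ (δ a) = δ (σ a)) :
    ∃ (S : Type) (_ : Ring S) (ι : D →+* S) (x : Fin n → S),
      Function.Injective ι ∧
      (∀ i j : Fin n, x i * x j = x j * x i) ∧
      (∀ (i : Fin n) (a : D), x i * ι a = ι (σ a) * x i + ι (δ a)) ∧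
      ∃ b : @Module.Basis (Fin n →₀ ℕ) D S _ _ (Module.compHom S ι),
        ∀ i : Fin n →₀ ℕ, b i = (List.ofFn fun j => x j ^ i j).prod := by
  refine ⟨↥(Sr (n := n) σ δ hδadd hδmul hcomm), inferInstance, iotaS (n := n) σ δ hδadd hδmul hcomm,
    xS (n := n) σ δ hδadd hδmul hcomm, ?_, ?_, ?_, ?_⟩
  · intro a b h
    exact iotaE_inj (Subtype.ext_iff.mp h)
  · intro i j
    exact Subtype.ext (Xop_comm σ δ hδadd i j hcomm)
  · intro j a
    exact Subtype.ext (Xop_iotaE σ δ hδadd hδmul j a)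
  · exact ⟨basisS (n := n) σ δ hδadd hδmul hcomm, basisS_apply (n := n) σ δ hδadd hδmul hcomm⟩
end

section
/- Let F be a finite field and σ : F → F an automorphism. Then every simple left module over the ring F[x₁,…,xₙ; σ] (generated over F by commuting variables x₁,…,xₙ with xᵢa = σ(a)xᵢ for a ∈ F) is finite-dimensional as a vector space over F. -/
open Polynomial

/-- Splitting a product of `f j * g j` over `Fin n` into two products, when all the `g i`
commute with all the `f j`. -/
private lemma ofFn_prod_mul_prod {S : Type*} [Monoid S] :
    ∀ {n : ℕ} (f g : Fin n → S),
      (∀ i j : Fin n, Commute (g i) (f j)) →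
      (List.ofFn fun j => f j * g j).prod = (List.ofFn f).prod * (List.ofFn g).prod := by
  intro n
  induction n with
  | zero => intro f g _; simp
  | succ k ih =>
    intro f g h
    rw [List.ofFn_succ, List.ofFn_succ (f := f), List.ofFn_succ (f := g),
      List.prod_cons, List.prod_cons, List.prod_cons,
      ih (fun i => f i.succ) (fun i => g i.succ) (fun i j => h i.succ j.succ)]
    have hcomm : Commute (g 0) (List.ofFn fun i : Fin k => f i.succ).prod := by
      apply Commute.list_prod_right
      intro a ha
      rw [List.mem_ofFn] at ha
      obtain ⟨i, rfl⟩ := ha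
      exact h 0 i.succ
    rw [mul_assoc (f 0), mul_assoc (f 0), ← mul_assoc (g 0), hcomm.eq, mul_assoc]

set_option maxHeartbeats 1000000 in
/-- The core of the Amitsur–Small type argument: if `M` is a simple module over a ring `S`,
`B` is a commutative algebra of finite type over a finite field `K` acting on `M` by
`S`-linear endomorphisms via `ψ`, and `M` is generated over `B` by finitely many elements,
then `M` is finite.  (Schur's lemma plus the Artin–Tate/Nullstellensatz argument.) -/
private lemma aux_finite_of_simple {K : Type*} [Field K] [Finite K]
    {S : Type*} [Ring S] {M : Type*} [AddCommGroup M] [Module S M]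
    (hM : IsSimpleModule S M)
    {B : Type*} [CommRing B] [Algebra K B] [hft : Algebra.FiniteType K B]
    (ψ : B →+* Module.End S M)
    {G : Type*} [Finite G] (gen : G → M)
    (hgen : ∀ w : M, w ∈ @Submodule.span B M _ _ (Module.compHom M ψ) (Set.range gen)) :
    Finite M := by
  classical
  haveI := hM
  haveI : Nontrivial M := IsSimpleModule.nontrivial S M
  set I : Ideal B := RingHom.ker ψ with hI
  let ψ' : B ⧸ I →+* Module.End S M := RingHom.kerLift ψ
  have hinj : Function.Injective ψ' := RingHom.kerLift_injective ψ
  letI instBM' : Module (B ⧸ I) M := Module.compHom M ψ'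
  have hsmul' : ∀ (bb : B ⧸ I) (w : M), bb • w = ψ' bb w := fun _ _ => rfl
  -- M is finitely generated over B ⧸ I
  haveI hMF : Module.Finite (B ⧸ I) M := by
    refine ⟨⟨(Set.finite_range gen).toFinset, ?_⟩⟩
    rw [Set.Finite.coe_toFinset, eq_top_iff]
    rintro w -
    letI instBM : Module B M := Module.compHom M ψ
    refine Submodule.span_induction ?_ ?_ ?_ ?_ (hgen w)
    · exact fun y hy => Submodule.subset_span hy
    · exact Submodule.zero_mem _
    · exact fun y z _ _ hy hz => Submodule.add_mem _ hy hz
    · intro bb y _ hy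
      have h9 : bb • y = (Ideal.Quotient.mk I bb) • y := by
        rw [hsmul' (Ideal.Quotient.mk I bb) y]
        show bb • y = (RingHom.kerLift ψ) ((Ideal.Quotient.mk I) bb) y
        rw [RingHom.kerLift_mk]
        rfl
      rw [h9]
      exact Submodule.smul_mem _ _ hy
  -- nontriviality
  have hEnt : Nontrivial (Module.End S M) := by
    obtain ⟨w, hw⟩ := exists_ne (0 : M)
    refine ⟨0, 1, fun h01 => hw ?_⟩
    have := LinearMap.congr_fun h01 w
    simpa using this.symm
  haveI := hEnt
  haveI hBnt : Nontrivial (B ⧸ I) := by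
    refine ⟨0, 1, fun h01 => ?_⟩
    have h2 := congrArg ψ' h01
    rw [map_zero, map_one] at h2
    exact zero_ne_one h2
  -- B ⧸ I is a field
  have hAfield : IsField (B ⧸ I) := by
    letI instDR : DivisionRing (Module.End S M) := Module.End.instDivisionRing
    haveI hENontriv : Nontrivial (Module.End (B ⧸ I) M) := by
      obtain ⟨w, hw⟩ := exists_ne (0 : M)
      refine ⟨0, 1, fun h01 => hw ?_⟩
      have := LinearMap.congr_fun h01 w
      simpa using this.symm
    refine ⟨exists_pair_ne (B ⧸ I), mul_comm, ?_⟩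
    intro a ha
    have haD : ψ' a ≠ 0 := fun h => ha (hinj (by rw [h, map_zero]))
    set u : Module.End S M := (ψ' a)⁻¹ with hudef
    have hu1 : ψ' a * u = 1 := mul_inv_cancel₀ haD
    have hu2 : u * ψ' a = 1 := inv_mul_cancel₀ haD
    have hucomm : ∀ cA : B ⧸ I, ψ' cA * u = u * ψ' cA := by
      intro cA
      have h1 : Commute (ψ' cA) (ψ' a) := by
        show ψ' cA * ψ' a = ψ' a * ψ' cA
        rw [← map_mul, ← map_mul, mul_comm]
      exact (h1.inv_right₀).eq
    -- u as a (B ⧸ I)-linear endomorphism of M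
    let uhat : Module.End (B ⧸ I) M :=
      { toFun := fun w => u w
        map_add' := fun w₁ w₂ => u.map_add w₁ w₂
        map_smul' := fun cA w => by
          simp only [RingHom.id_apply]
          have h3 := LinearMap.ext_iff.mp (hucomm cA) w
          rw [Module.End.mul_apply, Module.End.mul_apply] at h3
          rw [hsmul', hsmul']
          exact h3.symm }
    obtain ⟨P, hPm, hP0⟩ := Algebra.IsIntegral.isIntegral (R := B ⧸ I) uhat
    have hk : P.natDegree ≠ 0 := by
      intro h0
      rw [hPm.natDegree_eq_zero.mp h0] at hP0
      rw [Polynomial.eval₂_one] at hP0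
      exact one_ne_zero hP0
    obtain ⟨k', hk'⟩ : ∃ k', P.natDegree = k' + 1 :=
      ⟨P.natDegree - 1, (Nat.succ_pred_eq_of_pos (Nat.pos_of_ne_zero hk)).symm⟩
    rw [Polynomial.eval₂_eq_sum_range, hk'] at hP0
    -- transport the integrality relation to `Module.End S M`
    have hupow : ∀ (i : ℕ) (w : M), (uhat ^ i) w = (u ^ i) w := by
      intro i
      induction i with
      | zero => intro w; rfl
      | succ i ih =>
        intro w
        rw [pow_succ, pow_succ, Module.End.mul_apply, Module.End.mul_apply, ih]
        rfl
    have hSD : ∑ i ∈ Finset.range (k' + 1 + 1), ψ' (P.coeff i) * u ^ i = 0 := by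
      ext w
      have h5 := LinearMap.congr_fun hP0 w
      rw [LinearMap.sum_apply, LinearMap.zero_apply] at h5
      rw [LinearMap.sum_apply, LinearMap.zero_apply, ← h5]
      refine Finset.sum_congr rfl fun i _ => ?_
      rw [Module.End.mul_apply, Module.End.mul_apply]
      rw [Module.algebraMap_end_apply, hsmul', hupow]
    -- multiply by `ψ' a ^ k'` on the right
    have hau : Commute u (ψ' a) := hu2.trans hu1.symm
    have hpowmul : ∀ i, i ≤ k' → u ^ i * ψ' a ^ k' = ψ' a ^ (k' - i) := by
      intro i hi
      have h6 : ψ' a ^ k' = ψ' a ^ i * ψ' a ^ (k' - i) := by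
        rw [← pow_add, Nat.add_sub_cancel' hi]
      rw [h6, ← mul_assoc, ← hau.mul_pow, hu2, one_pow, one_mul]
    have hmain := congrArg (fun f => f * ψ' a ^ k') hSD
    simp only [Finset.sum_mul, zero_mul] at hmain
    rw [Finset.sum_range_succ] at hmain
    have hcoefftop : P.coeff (k' + 1) = 1 := by
      have := hPm.coeff_natDegree
      rwa [hk'] at this
    rw [hcoefftop, map_one] at hmain
    have htop : (1 : Module.End S M) * u ^ (k' + 1) * ψ' a ^ k' = u := by
      rw [one_mul, pow_succ', mul_assoc, hpowmul k' le_rfl]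
      rw [Nat.sub_self, pow_zero, mul_one]
    rw [htop] at hmain
    have hrest : ∀ i ∈ Finset.range (k' + 1),
        ψ' (P.coeff i) * u ^ i * ψ' a ^ k' = ψ' (P.coeff i) * ψ' a ^ (k' - i) := by
      intro i hi
      rw [Finset.mem_range, Nat.lt_succ_iff] at hi
      rw [mul_assoc, hpowmul i hi]
    rw [Finset.sum_congr rfl hrest] at hmain
    -- conclude that u is in the image of ψ'
    have h7 : u = ψ' (-∑ i ∈ Finset.range (k' + 1), P.coeff i * a ^ (k' - i)) := by
      rw [map_neg, map_sum]
      rw [eq_neg_iff_add_eq_zero, add_comm]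
      have h8 : ∀ i ∈ Finset.range (k' + 1),
          ψ' (P.coeff i * a ^ (k' - i)) = ψ' (P.coeff i) * ψ' a ^ (k' - i) := by
        intro i _
        rw [map_mul, map_pow]
      rw [Finset.sum_congr rfl h8]
      exact hmain
    refine ⟨-∑ i ∈ Finset.range (k' + 1), P.coeff i * a ^ (k' - i), ?_⟩
    apply hinj
    rw [map_mul, map_one, ← h7]
    exact hu1
  -- conclude by the Nullstellensatz over K
  letI instAF : Field (B ⧸ I) := hAfield.toField
  haveI : Module.Finite K (B ⧸ I) := finite_of_finite_type_of_isJacobsonRing K (B ⧸ I)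
  haveI : Finite (B ⧸ I) := Module.finite_of_finite K
  exact Module.finite_of_finite (B ⧸ I)

set_option maxHeartbeats 1000000 in
/-- Let `F` be a finite field, `σ` an automorphism of `F`, and `S = F[x₁,…,xₙ; σ]` the skew
polynomial ring generated over `F` by commuting variables `x₁,…,xₙ` with `xᵢ·a = σ(a)·xᵢ`
(zero `σ`-derivation), a free left `F`-module with basis the monomials `x₁^{i₁}⋯xₙ^{iₙ}`.
Then every simple left `S`-module is finite-dimensional as an `F`-vector space. -/
theorem skew_amitsur_small_finite_field {F S : Type*} [Field F] [Finite F] [Ring S] {n : ℕ}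
    (σ : F ≃+* F)
    (ι : F →+* S) (x : Fin n → S)
    (hx : ∀ i j : Fin n, x i * x j = x j * x i)
    (hrel : ∀ (i : Fin n) (a : F), x i * ι a = ι (σ a) * x i)
    (b : @Module.Basis (Fin n →₀ ℕ) F S _ _ (Module.compHom S ι))
    (hb : ∀ i : Fin n →₀ ℕ, b i = (List.ofFn fun j => x j ^ i j).prod)
    (M : Type*) [AddCommGroup M] [Module S M] (hM : IsSimpleModule S M) :
    @Module.Finite F M _ _ (Module.compHom M ι) := by
  classical
  cases nonempty_fintype F
  haveI := hM
  haveI : Nontrivial M := IsSimpleModule.nontrivial S M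
  letI instFS : Module F S := Module.compHom S ι
  -- It suffices to show `M` is finite as a set.
  suffices hfin : Finite M by
    letI : Module F M := Module.compHom M ι
    haveI := hfin
    exact Module.Finite.of_finite
  -- the characteristic
  set p := ringChar F with hpdef
  haveI hpF : CharP F p := ringChar.charP F
  have hp_prime : p.Prime := CharP.char_is_prime F p
  haveI : Fact p.Prime := ⟨hp_prime⟩
  haveI : NeZero p := ⟨hp_prime.ne_zero⟩
  -- the order of σ
  haveI : Finite (F ≃+* F) :=
    Finite.of_injective (fun e => (e : F → F)) DFunLike.coe_injective
  set m := orderOf σ with hmdef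
  have hm0 : 0 < m := orderOf_pos σ
  have hσm : σ ^ m = 1 := pow_orderOf_eq_one σ
  -- iterated commutation relations
  have hrelpow : ∀ (i : Fin n) (k : ℕ) (a : F), x i ^ k * ι a = ι ((σ ^ k) a) * x i ^ k := by
    intro i k
    induction k with
    | zero =>
      intro a
      simp only [pow_zero, one_mul, mul_one]
      rfl
    | succ k ihk =>
      intro a
      have h1 : ((σ ^ (k + 1) : F ≃+* F)) a = (σ ^ k) (σ a) := by rw [pow_succ]; rfl
      rw [h1, pow_succ, mul_assoc, hrel i a, ← mul_assoc, ihk (σ a), mul_assoc]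
  -- x i ^ m is central
  have hyccore : ∀ (i : Fin n) (c : F) (e : Fin n →₀ ℕ), Commute (x i ^ m) (c • b e) := by
    intro i c e
    have h1 : (c • b e : S) = ι c * b e := rfl
    rw [h1, hb e]
    refine Commute.mul_right ?_ ?_
    · have h2 : ((σ ^ m : F ≃+* F)) c = c := by rw [hσm]; rfl
      have h3 : x i ^ m * ι c = ι c * x i ^ m := by rw [hrelpow i m c, h2]
      exact h3
    · refine Commute.list_prod_right _ _ ?_
      intro a ha
      rw [List.mem_ofFn] at ha
      obtain ⟨j, rfl⟩ := ha
      have h4 : Commute (x i) (x j) := hx i j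
      exact h4.pow_pow m (e j)
  have hyc : ∀ (i : Fin n) (s : S), Commute (x i ^ m) s := by
    intro i s
    have hs : (b.repr s).sum (fun e c => c • b e) = s := by
      rw [← Finsupp.linearCombination_apply]
      exact b.linearCombination_repr s
    rw [← hs, Finsupp.sum]
    exact Commute.sum_right _ _ _ fun e _ => hyccore i _ e
  -- the central elements, as elements of the center
  let yc : Fin n → Subring.center S := fun i =>
    ⟨x i ^ m, Subring.mem_center_iff.mpr fun g => (hyc i g).symm⟩
  -- the action of the center on M by S-linear endomorphisms
  let θ : Subring.center S →+* Module.End S M :=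
    { toFun := fun z =>
        { toFun := fun w => (z : S) • w
          map_add' := fun u v => smul_add _ u v
          map_smul' := fun s w => by
            simp only [RingHom.id_apply]
            rw [← mul_smul, ← mul_smul, Subring.mem_center_iff.mp z.2 s] }
      map_one' := by ext w; simp
      map_mul' := fun z w => by
        ext u
        simp only [LinearMap.coe_mk, AddHom.coe_mk, Module.End.mul_apply, MulMemClass.coe_mul,
          mul_smul]
      map_zero' := by ext w; simp
      map_add' := fun z w => by
        ext u
        simp [add_smul] }
  -- a nonzero vector generating M over S
  obtain ⟨v, hv⟩ := exists_ne (0 : M)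
  have hspan : Submodule.span S {v} = ⊤ := IsSimpleModule.span_singleton_eq_top S hv
  -- characteristic of S and of its center
  haveI hSnt : Nontrivial S := by
    refine ⟨1, 0, fun h10 => hv ?_⟩
    rw [← one_smul S v, h10, zero_smul]
  have hpS : (p : S) = 0 := by
    rw [← map_natCast ι p, CharP.cast_eq_zero F p, map_zero]
  haveI hZnt : Nontrivial (Subring.center S) := by
    refine ⟨0, 1, fun h01 => ?_⟩
    have h2 := congrArg (Subtype.val) h01
    simp only [ZeroMemClass.coe_zero, OneMemClass.coe_one] at h2
    exact zero_ne_one h2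
  have hpZ : (p : Subring.center S) = 0 := by
    apply Subtype.ext
    push_cast
    exact hpS
  haveI hZchar : CharP (Subring.center S) p := by
    have h1 := CharP.ringChar_of_prime_eq_zero hp_prime hpZ
    have h2 : CharP (Subring.center S) (ringChar (Subring.center S)) := ringChar.charP _
    rwa [h1] at h2
  letI : Algebra (ZMod p) (Subring.center S) := (ZMod.castHom dvd_rfl _).toAlgebra
  -- the polynomial algebra mapping onto the central subalgebra
  let ψ₀ : MvPolynomial (Fin n) (ZMod p) →+* Subring.center S :=
    MvPolynomial.eval₂Hom (ZMod.castHom dvd_rfl _) yc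
  let ψ : MvPolynomial (Fin n) (ZMod p) →+* Module.End S M := θ.comp ψ₀
  letI instBM : Module (MvPolynomial (Fin n) (ZMod p)) M := Module.compHom M ψ
  have hBsmul : ∀ (bb : MvPolynomial (Fin n) (ZMod p)) (w : M), bb • w = ψ bb w :=
    fun _ _ => rfl
  -- the finite generating family
  let g : F × (Fin n → Fin m) → M := fun cr =>
    (ι cr.1 * (List.ofFn fun j => x j ^ ((cr.2 j : ℕ))).prod) • v
  have hmono : ∀ (c : F) (e : Fin n →₀ ℕ),
      (ι c * b e) • v ∈ Submodule.span (MvPolynomial (Fin n) (ZMod p)) (Set.range g) := by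
    intro c e
    set q : Fin n → ℕ := fun j => e j / m with hq
    set r : Fin n → Fin m := fun j => ⟨e j % m, Nat.mod_lt _ hm0⟩ with hr
    set zq : Subring.center S := (List.ofFn fun j => yc j ^ q j).prod with hzqdef
    have hzq : (zq : S) = (List.ofFn fun j => (x j ^ m) ^ q j).prod := by
      show (Subring.center S).subtype zq = _
      rw [hzqdef, map_list_prod, List.map_ofFn]
      refine congrArg List.prod (congrArg List.ofFn (funext fun j => ?_))
      show (Subring.center S).subtype (yc j ^ q j) = (x j ^ m) ^ q j
      rw [map_pow]
      rfl
    have hxsplit : b e = (zq : S) * (List.ofFn fun j => x j ^ ((r j : ℕ))).prod := by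
      have hpt : ∀ j, x j ^ (e j) = (x j ^ m) ^ q j * x j ^ ((r j : ℕ)) := by
        intro j
        rw [← pow_mul, ← pow_add]
        congr 1
        exact (Nat.div_add_mod (e j) m).symm
      have hlist : (List.ofFn fun j => x j ^ e j)
          = List.ofFn fun j => ((x j ^ m) ^ q j) * (x j ^ ((r j : ℕ))) := by
        congr 1
        funext j
        exact hpt j
      rw [hb e, hlist, ofFn_prod_mul_prod _ _ ?hcp, hzq]
      case hcp =>
        intro i j
        rw [← pow_mul]
        have h4 : Commute (x i) (x j) := hx i j
        exact h4.pow_pow _ _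
    have hrearr : ι c * b e
        = (zq : S) * (ι c * (List.ofFn fun j => x j ^ ((r j : ℕ))).prod) := by
      rw [hxsplit, ← mul_assoc, Subring.mem_center_iff.mp zq.2 (ι c), mul_assoc]
    set mono : MvPolynomial (Fin n) (ZMod p) := ∏ j, MvPolynomial.X j ^ q j with hmonodef
    have hψ₀X : ∀ j, ψ₀ (MvPolynomial.X j) = yc j := fun j => MvPolynomial.eval₂Hom_X' _ _ j
    have hψ₀mono : ψ₀ mono = zq := by
      rw [hmonodef, map_prod, hzqdef, List.prod_ofFn]
      refine Finset.prod_congr rfl fun j _ => ?_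
      rw [map_pow, hψ₀X j]
    have hfinal : (ι c * b e) • v = mono • g (c, r) := by
      rw [hBsmul]
      show (ι c * b e) • v = θ (ψ₀ mono) (g (c, r))
      rw [hψ₀mono]
      show (ι c * b e) • v
        = (zq : S) • ((ι c * (List.ofFn fun j => x j ^ ((r j : ℕ))).prod) • v)
      rw [hrearr, mul_smul]
    rw [hfinal]
    exact Submodule.smul_mem _ _ (Submodule.subset_span ⟨(c, r), rfl⟩)
  have hgen : ∀ w : M,
      w ∈ Submodule.span (MvPolynomial (Fin n) (ZMod p)) (Set.range g) := by
    intro w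
    have hw : w ∈ Submodule.span S {v} := by rw [hspan]; exact Submodule.mem_top
    obtain ⟨s, rfl⟩ := Submodule.mem_span_singleton.mp hw
    have hsrepr : (b.repr s).sum (fun e c => c • b e) = s := by
      rw [← Finsupp.linearCombination_apply]
      exact b.linearCombination_repr s
    rw [← hsrepr, Finsupp.sum, Finset.sum_smul]
    apply Submodule.sum_mem
    intro e _
    have h1 : ((b.repr s) e • b e : S) = ι ((b.repr s) e) * b e := rfl
    rw [h1]
    exact hmono _ e
  haveI hft : Algebra.FiniteType (ZMod p) (MvPolynomial (Fin n) (ZMod p)) :=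
    inferInstance
  exact aux_finite_of_simple (K := ZMod p) hM ψ g hgen
end
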